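/- arXiv:2512.19660 — 8 statements merged into one kernel-verified Lean document; each statement's English description precedes it below -/
import Mathlib

section
/- Suppose k is odd. Then there is no ℤ-linear map χ from the conic-bundle lattice to itself that preserves the form b (i.e. b(χx, χy) = b(x, y) for all x, y) and satisfies χ(f) = f and χ(eᵢ) = f − eᵢ for all i = 1,…,k. (Key step in the proof of Proposition 6.5 of the paper: for a marked conic bundle on a cubic surface there cannot exist an isometry of the Picard lattice fixing the fiber class and sending each chosen degenerate-fiber component Eᵢ to the opposite component Fᵢ = F − Eᵢ.) -/
/-- key step in the proof of Proposition 6.5 of the paper.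
Suppose `k` is odd. Then there is no ℤ-linear map `χ` of the conic-bundle lattice
(basis `c, f, e₁, …, e_k` with `b c c = n`, `b c f = 1`, `b c (e i) = 0`, `b f f = 0`,
`b f (e i) = 0`, `b (e i) (e i) = -1`, `b (e i) (e j) = 0` for `i ≠ j`) to itself
preserving `b` with `χ f = f` and `χ (e i) = f - e i` for all `i`. -/
theorem stmt_3 (k : ℕ) (hk : 1 ≤ k) (hodd : Odd k) (n : ℤ)
    (b : (ℤ × ℤ × (Fin k → ℤ)) →ₗ[ℤ] (ℤ × ℤ × (Fin k → ℤ)) →ₗ[ℤ] ℤ)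
    (c f : ℤ × ℤ × (Fin k → ℤ)) (e : Fin k → ℤ × ℤ × (Fin k → ℤ))
    (hc : c = (1, 0, 0)) (hf : f = (0, 1, 0))
    (he : ∀ i, e i = (0, 0, Pi.single i 1))
    (hcc : b c c = n) (hcf : b c f = 1) (hce : ∀ i, b c (e i) = 0)
    (hff : b f f = 0) (hfe : ∀ i, b f (e i) = 0)
    (hee : ∀ i, b (e i) (e i) = -1)
    (hee' : ∀ i j, i ≠ j → b (e i) (e j) = 0)
    (hsymm : ∀ x y, b x y = b y x) :
    ¬ ∃ χ : (ℤ × ℤ × (Fin k → ℤ)) →ₗ[ℤ] (ℤ × ℤ × (Fin k → ℤ)),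
        (∀ x y, b (χ x) (χ y) = b x y) ∧ χ f = f ∧ ∀ i, χ (e i) = f - e i := by
  rintro ⟨χ, hpres, hχf, hχe⟩
  -- decomposition of arbitrary vectors
  have hdec : ∀ u : ℤ × ℤ × (Fin k → ℤ),
      u = u.1 • c + u.2.1 • f + ∑ i, u.2.2 i • e i := by
    intro u
    subst hc hf
    simp only [he]
    refine Prod.ext ?_ (Prod.ext ?_ ?_)
    · simp [Prod.fst_sum]
    · simp [Prod.snd_sum, Prod.fst_sum]
    · funext j
      simp [Prod.snd_sum, Finset.sum_apply, Pi.single_apply,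
        Finset.sum_ite_eq' (Finset.univ : Finset (Fin k)) j]
  have expand : ∀ w u : ℤ × ℤ × (Fin k → ℤ),
      b w u = u.1 * b w c + u.2.1 * b w f + ∑ i, u.2.2 i * b w (e i) := by
    intro w u
    conv_lhs => rw [hdec u]
    simp only [map_add, map_smul, map_sum, smul_eq_mul]
  have hbfc : b f c = 1 := by rw [hsymm]; exact hcf
  have hvf : b (χ c) f = 1 := by
    have h := hpres c f
    rw [hχf, hcf] at h
    exact h
  have hx : (χ c).1 = 1 := by
    have h := expand f (χ c)
    rw [hbfc, hff, hsymm f (χ c), hvf] at h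
    simp only [hfe, mul_zero, mul_one, Finset.sum_const_zero] at h
    linarith
  have hve : ∀ j, b (χ c) (e j) = 1 := by
    intro j
    have h := hpres c (e j)
    rw [hχe j, hce j, map_sub, hvf] at h
    linarith
  have hg : ∀ j, (χ c).2.2 j = -1 := by
    intro j
    have h := expand (e j) (χ c)
    have hejc : b (e j) c = 0 := by rw [hsymm]; exact hce j
    have hejf : b (e j) f = 0 := by rw [hsymm]; exact hfe j
    have hsum : ∑ i, (χ c).2.2 i * b (e j) (e i) = -((χ c).2.2 j) := by
      rw [Finset.sum_eq_single j]
      · rw [hee j]; ring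
      · intro i _ hij
        rw [hee' j i (Ne.symm hij), mul_zero]
      · simp
    rw [hejc, hejf, hsum, hsymm (e j) (χ c), hve j] at h
    linarith
  have hvc : b (χ c) c = n + (χ c).2.1 := by
    rw [hsymm, expand c (χ c), hcc, hcf, hx]
    simp only [hce, mul_zero, Finset.sum_const_zero]
    ring
  have hvv : b (χ c) (χ c) = n := by rw [hpres]; exact hcc
  rw [expand (χ c) (χ c), hvc, hvf, hx] at hvv
  simp only [hve, mul_one] at hvv
  have hsumg : ∑ i, (χ c).2.2 i = -(k : ℤ) := by
    simp [hg]
  rw [hsumg] at hvv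
  obtain ⟨m, hm⟩ := hodd
  omega
end

section
/- If q, d, d' are line classes in the degree-4 del Pezzo lattice with d ≠ d' and b(q,d) = b(q,d') = 1, then b(d,d') = 0. (The five lines meeting a given line on a del Pezzo surface of degree 4 are pairwise disjoint; this underlies the notion of a marking.) -/
/-- The intersection form of the degree-4 del Pezzo lattice `L₄ = ℤ⁶`, with basis
`ℓ` (coordinate 0) and `e₁, …, e₅` (coordinates 1–5):
`b ℓ ℓ = 1`, `b ℓ eᵢ = 0`, `b eᵢ eᵢ = -1`, `b eᵢ eⱼ = 0` for `i ≠ j`. -/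
def bDP4 (x y : Fin 6 → ℤ) : ℤ := x 0 * y 0 - ∑ i : Fin 5, x i.succ * y i.succ

/-- The canonical class `k₄ = -3ℓ + e₁ + e₂ + e₃ + e₄ + e₅`. -/
def kDP4 : Fin 6 → ℤ := ![-3, 1, 1, 1, 1, 1]

/-- A line class: `d` with `b d d = -1` and `b d k₄ = -1`. -/
def IsLineClassDP4 (d : Fin 6 → ℤ) : Prop := bDP4 d d = -1 ∧ bDP4 d kDP4 = -1

/-- The orthogonal complement of a norm-1 vector is negative definite:
if `b w w = 1`, `b x w = 0` and `b x x ≥ 0`, then `x = 0`. -/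
lemma negdef_aux (w x : Fin 6 → ℤ) (hw : bDP4 w w = 1) (hx : bDP4 x w = 0)
    (hxx : 0 ≤ bDP4 x x) : x = 0 := by
  unfold bDP4 at hw hx hxx
  set F : Fin 5 → ℤ := fun i => x i.succ with hF
  set G : Fin 5 → ℤ := fun i => w i.succ with hG
  have hCS := Finset.sum_mul_sq_le_sq_mul_sq Finset.univ F G
  have hfg : ∑ i : Fin 5, F i * G i = x 0 * w 0 := by linarith
  have hg2 : ∑ i : Fin 5, G i ^ 2 = w 0 * w 0 - 1 := by
    have : ∑ i : Fin 5, G i ^ 2 = ∑ i : Fin 5, w i.succ * w i.succ := by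
      apply Finset.sum_congr rfl; intro i _; rw [hG]; ring
    omega
  have hf2 : ∑ i : Fin 5, F i ^ 2 ≤ x 0 * x 0 := by
    have : ∑ i : Fin 5, F i ^ 2 = ∑ i : Fin 5, x i.succ * x i.succ := by
      apply Finset.sum_congr rfl; intro i _; rw [hF]; ring
    omega
  rw [hfg, hg2] at hCS
  have hgnn : (0:ℤ) ≤ w 0 * w 0 - 1 := by
    have : (0:ℤ) ≤ ∑ i : Fin 5, G i ^ 2 := Finset.sum_nonneg fun i _ => sq_nonneg _
    omega
  have hx0 : x 0 = 0 := by nlinarith [sq_nonneg (x 0), sq_nonneg (w 0)]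
  have hf20 : ∑ i : Fin 5, F i ^ 2 = 0 := by
    have hnn : (0:ℤ) ≤ ∑ i : Fin 5, F i ^ 2 := Finset.sum_nonneg fun i _ => sq_nonneg _
    nlinarith
  have hFi : ∀ i : Fin 5, F i = 0 := by
    intro i
    have := (Finset.sum_eq_zero_iff_of_nonneg (fun i _ => sq_nonneg (F i))).mp hf20 i
      (Finset.mem_univ i)
    exact pow_eq_zero_iff two_ne_zero |>.mp this
  funext i
  refine Fin.cases ?_ ?_ i
  · exact hx0
  · intro j; exact hFi j

private lemma b_add_add (x y : Fin 6 → ℤ) :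
    bDP4 (fun i => x i + y i) (fun i => x i + y i)
      = bDP4 x x + 2 * bDP4 x y + bDP4 y y := by
  simp only [bDP4, Fin.sum_univ_five]
  ring

private lemma b_sub_sub (x y : Fin 6 → ℤ) :
    bDP4 (fun i => x i - y i) (fun i => x i - y i)
      = bDP4 x x - 2 * bDP4 x y + bDP4 y y := by
  simp only [bDP4, Fin.sum_univ_five]
  ring

private lemma b_add_left (x y z : Fin 6 → ℤ) :
    bDP4 (fun i => x i + y i) z = bDP4 x z + bDP4 y z := by
  simp only [bDP4, Fin.sum_univ_five]
  ring

private lemma b_sub_left (x y z : Fin 6 → ℤ) :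
    bDP4 (fun i => x i - y i) z = bDP4 x z - bDP4 y z := by
  simp only [bDP4, Fin.sum_univ_five]
  ring

private lemma b_symm (x y : Fin 6 → ℤ) : bDP4 x y = bDP4 y x := by
  simp only [bDP4, Fin.sum_univ_five]
  ring

/-- if `q, d, d'` are line classes with `d ≠ d'` and
`b q d = b q d' = 1`, then `b d d' = 0` (the five lines meeting a given line on a
del Pezzo surface of degree 4 are pairwise disjoint). -/
theorem stmt_6 (q d d' : Fin 6 → ℤ)
    (hq : IsLineClassDP4 q) (hd : IsLineClassDP4 d) (hd' : IsLineClassDP4 d')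
    (hne : d ≠ d') (h1 : bDP4 q d = 1) (h2 : bDP4 q d' = 1) :
    bDP4 d d' = 0 := by
  obtain ⟨hqq, hqk⟩ := hq
  obtain ⟨hdd, hdk⟩ := hd
  obtain ⟨hdd', hdk'⟩ := hd'
  set w : Fin 6 → ℤ := fun i => q i + kDP4 i with hw
  have hkk : bDP4 kDP4 kDP4 = 4 := by decide
  have hww : bDP4 w w = 1 := by
    rw [hw, b_add_add]
    omega
  have hdw : bDP4 d w = 0 := by
    rw [b_symm d w, hw, b_add_left, b_symm kDP4 d]
    omega
  have hdw' : bDP4 d' w = 0 := by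
    rw [b_symm d' w, hw, b_add_left, b_symm kDP4 d']
    omega
  set m := bDP4 d d' with hm
  -- m ≥ 0 : otherwise d - d' has nonnegative norm and is orthogonal to w
  have hmg : 0 ≤ m := by
    by_contra h
    have hx : bDP4 (fun i => d i - d' i) w = 0 := by
      rw [b_sub_left]; omega
    have hxx : 0 ≤ bDP4 (fun i => d i - d' i) (fun i => d i - d' i) := by
      rw [b_sub_sub]; omega
    have := negdef_aux w _ hww hx hxx
    apply hne
    funext i
    have := congrFun this i
    simp only [Pi.zero_apply] at this
    omega
  -- m ≤ 0 : otherwise d + d' has nonnegative norm, forcing d' = -d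
  have hml : m ≤ 0 := by
    by_contra h
    have hx : bDP4 (fun i => d i + d' i) w = 0 := by
      rw [b_add_left]; omega
    have hxx : 0 ≤ bDP4 (fun i => d i + d' i) (fun i => d i + d' i) := by
      rw [b_add_add]; omega
    have h0 := negdef_aux w _ hww hx hxx
    have hneg : d' = fun i => -d i := by
      funext i
      have := congrFun h0 i
      simp only [Pi.zero_apply] at this
      omega
    rw [hneg] at hdk'
    have : bDP4 (fun i => -d i) kDP4 = -bDP4 d kDP4 := by
      simp only [bDP4, Fin.sum_univ_five]; ring
    omega
  omega
end

section
/- If d₁, …, d₅ are five pairwise distinct line classes in the degree-4 del Pezzo lattice with b(dᵢ,dⱼ) = 0 for all i ≠ j, then there exists exactly one line class q with b(q,dᵢ) = 1 for all i = 1,…,5. (A marking of a del Pezzo surface of degree 4 is uniquely determined by its quintuple of pairwise disjoint lines: the quintuple of lines meeting a line Q determines Q, and vice versa.) -/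
instance : DecidablePred IsLineClassDP4 := fun d => by
  unfold IsLineClassDP4; infer_instance

def linesDP4 : List (Fin 6 → ℤ) :=
  [![0,1,0,0,0,0], ![0,0,1,0,0,0], ![0,0,0,1,0,0], ![0,0,0,0,1,0], ![0,0,0,0,0,1],
   ![1,-1,-1,0,0,0], ![1,-1,0,-1,0,0], ![1,-1,0,0,-1,0], ![1,-1,0,0,0,-1],
   ![1,0,-1,-1,0,0], ![1,0,-1,0,-1,0], ![1,0,-1,0,0,-1],
   ![1,0,0,-1,-1,0], ![1,0,0,-1,0,-1], ![1,0,0,0,-1,-1],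
   ![2,-1,-1,-1,-1,-1]]

set_option maxHeartbeats 1000000 in
lemma mem_linesDP4 (d : Fin 6 → ℤ) (h : IsLineClassDP4 d) : d ∈ linesDP4 := by
  obtain ⟨h1, h2⟩ := h
  have h1' : d 0 * d 0 - (d 1 * d 1 + d 2 * d 2 + d 3 * d 3 + d 4 * d 4 + d 5 * d 5) = -1 := by
    simpa [bDP4, Fin.sum_univ_five, Fin.succ] using h1
  have h2' : -(d 0 * 3) - (d 1 + d 2 + d 3 + d 4 + d 5) = -1 := by
    simpa [bDP4, kDP4, Fin.sum_univ_five, Fin.succ] using h2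
  have hd : d = ![d 0, d 1, d 2, d 3, d 4, d 5] := by
    funext i; fin_cases i <;> rfl
  have hq : 4 * (d 0 * d 0) - 6 * d 0 - 4 ≤ 0 := by
    nlinarith [sq_nonneg (d 1 - d 2), sq_nonneg (d 1 - d 3), sq_nonneg (d 1 - d 4),
      sq_nonneg (d 1 - d 5), sq_nonneg (d 2 - d 3), sq_nonneg (d 2 - d 4),
      sq_nonneg (d 2 - d 5), sq_nonneg (d 3 - d 4), sq_nonneg (d 3 - d 5),
      sq_nonneg (d 4 - d 5)]
  have ha0 : 0 ≤ d 0 := by nlinarith [hq]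
  have ha2 : d 0 ≤ 2 := by nlinarith [hq]
  have hnn : ∀ x : ℤ, 0 ≤ x * (x - 1) := by
    intro x
    rcases le_or_gt x 0 with h | h
    · nlinarith [mul_nonneg (by linarith : (0:ℤ) ≤ -x) (by linarith : (0:ℤ) ≤ 1 - x)]
    · exact mul_nonneg (by linarith) (by linarith)
  have hnp : ∀ x : ℤ, 0 ≤ x * (x + 1) := by
    intro x
    rcases le_or_gt x (-1) with h | h
    · nlinarith [mul_nonneg (by linarith : (0:ℤ) ≤ -x) (by linarith : (0:ℤ) ≤ -(x+1))]
    · exact mul_nonneg (by linarith) (by linarith)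
  have ha : d 0 = 0 ∨ d 0 = 1 ∨ d 0 = 2 := by omega
  rcases ha with ha | ha | ha
  · -- a = 0 : each bᵢ ∈ {0,1}
    have hsum : d 1 * (d 1 - 1) + d 2 * (d 2 - 1) + d 3 * (d 3 - 1) + d 4 * (d 4 - 1)
        + d 5 * (d 5 - 1) = 0 := by
      linear_combination (-1) * h1' + h2' + (d 0 + 3) * ha
    have hz : ∀ i : Fin 6, d i * (d i - 1) = 0 → d i = 0 ∨ d i = 1 := by
      intro i hi
      rcases mul_eq_zero.mp hi with h | h
      · exact Or.inl h
      · exact Or.inr (by omega)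
    have e1 := hz 1 (by linarith [hnn (d 1), hnn (d 2), hnn (d 3), hnn (d 4), hnn (d 5)])
    have e2 := hz 2 (by linarith [hnn (d 1), hnn (d 2), hnn (d 3), hnn (d 4), hnn (d 5)])
    have e3 := hz 3 (by linarith [hnn (d 1), hnn (d 2), hnn (d 3), hnn (d 4), hnn (d 5)])
    have e4 := hz 4 (by linarith [hnn (d 1), hnn (d 2), hnn (d 3), hnn (d 4), hnn (d 5)])
    have e5 := hz 5 (by linarith [hnn (d 1), hnn (d 2), hnn (d 3), hnn (d 4), hnn (d 5)])
    rcases e1 with e1 | e1 <;> rcases e2 with e2 | e2 <;> rcases e3 with e3 | e3 <;>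
      rcases e4 with e4 | e4 <;> rcases e5 with e5 | e5 <;>
      first
        | omega
        | (rw [hd, ha, e1, e2, e3, e4, e5]; decide)
  · -- a = 1 : each bᵢ ∈ {-1,0}
    have hsum : d 1 * (d 1 + 1) + d 2 * (d 2 + 1) + d 3 * (d 3 + 1) + d 4 * (d 4 + 1)
        + d 5 * (d 5 + 1) = 0 := by
      linear_combination (-1) * h1' - h2' + (d 0 - 2) * ha
    have hz : ∀ i : Fin 6, d i * (d i + 1) = 0 → d i = -1 ∨ d i = 0 := by
      intro i hi
      rcases mul_eq_zero.mp hi with h | h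
      · exact Or.inr h
      · exact Or.inl (by omega)
    have e1 := hz 1 (by linarith [hnp (d 1), hnp (d 2), hnp (d 3), hnp (d 4), hnp (d 5)])
    have e2 := hz 2 (by linarith [hnp (d 1), hnp (d 2), hnp (d 3), hnp (d 4), hnp (d 5)])
    have e3 := hz 3 (by linarith [hnp (d 1), hnp (d 2), hnp (d 3), hnp (d 4), hnp (d 5)])
    have e4 := hz 4 (by linarith [hnp (d 1), hnp (d 2), hnp (d 3), hnp (d 4), hnp (d 5)])
    have e5 := hz 5 (by linarith [hnp (d 1), hnp (d 2), hnp (d 3), hnp (d 4), hnp (d 5)])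
    rcases e1 with e1 | e1 <;> rcases e2 with e2 | e2 <;> rcases e3 with e3 | e3 <;>
      rcases e4 with e4 | e4 <;> rcases e5 with e5 | e5 <;>
      first
        | omega
        | (rw [hd, ha, e1, e2, e3, e4, e5]; decide)
  · -- a = 2 : each bᵢ = -1
    have hsum : (d 1 + 1)^2 + (d 2 + 1)^2 + (d 3 + 1)^2 + (d 4 + 1)^2 + (d 5 + 1)^2 = 0 := by
      linear_combination (-1) * h1' - 2 * h2' + (d 0 - 4) * ha
    have hz : ∀ i : Fin 6, (d i + 1)^2 = 0 → d i = -1 := by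
      intro i hi
      have := sq_eq_zero_iff.mp hi; omega
    have e1 := hz 1 (by linarith [sq_nonneg (d 1 + 1), sq_nonneg (d 2 + 1), sq_nonneg (d 3 + 1), sq_nonneg (d 4 + 1), sq_nonneg (d 5 + 1)])
    have e2 := hz 2 (by linarith [sq_nonneg (d 1 + 1), sq_nonneg (d 2 + 1), sq_nonneg (d 3 + 1), sq_nonneg (d 4 + 1), sq_nonneg (d 5 + 1)])
    have e3 := hz 3 (by linarith [sq_nonneg (d 1 + 1), sq_nonneg (d 2 + 1), sq_nonneg (d 3 + 1), sq_nonneg (d 4 + 1), sq_nonneg (d 5 + 1)])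
    have e4 := hz 4 (by linarith [sq_nonneg (d 1 + 1), sq_nonneg (d 2 + 1), sq_nonneg (d 3 + 1), sq_nonneg (d 4 + 1), sq_nonneg (d 5 + 1)])
    have e5 := hz 5 (by linarith [sq_nonneg (d 1 + 1), sq_nonneg (d 2 + 1), sq_nonneg (d 3 + 1), sq_nonneg (d 4 + 1), sq_nonneg (d 5 + 1)])
    rw [hd, ha, e1, e2, e3, e4, e5]; decide

lemma lines_isLineDP4 : ∀ q ∈ linesDP4, IsLineClassDP4 q := by decide

set_option maxHeartbeats 4000000 in
lemma keyDP4 : ∀ d1 ∈ linesDP4, ∀ d2 ∈ linesDP4, bDP4 d1 d2 = 0 →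
    ∀ d3 ∈ linesDP4, bDP4 d1 d3 = 0 → bDP4 d2 d3 = 0 →
    ∀ d4 ∈ linesDP4, bDP4 d1 d4 = 0 → bDP4 d2 d4 = 0 → bDP4 d3 d4 = 0 →
    ∀ d5 ∈ linesDP4, bDP4 d1 d5 = 0 → bDP4 d2 d5 = 0 → bDP4 d3 d5 = 0 → bDP4 d4 d5 = 0 →
    ∃ q ∈ linesDP4,
      (bDP4 q d1 = 1 ∧ bDP4 q d2 = 1 ∧ bDP4 q d3 = 1 ∧ bDP4 q d4 = 1 ∧ bDP4 q d5 = 1) ∧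
      ∀ q' ∈ linesDP4,
        (bDP4 q' d1 = 1 ∧ bDP4 q' d2 = 1 ∧ bDP4 q' d3 = 1 ∧ bDP4 q' d4 = 1 ∧ bDP4 q' d5 = 1) →
        q' = q := by
  decide

/-- if `d₁, …, d₅` are five pairwise distinct, pairwise orthogonal
line classes, then there is exactly one line class `q` with `b q dᵢ = 1` for all
`i` (a marking of a del Pezzo surface of degree 4 is uniquely determined by its
quintuple of pairwise disjoint lines). -/
theorem stmt_7 (d : Fin 5 → Fin 6 → ℤ)
    (hline : ∀ i, IsLineClassDP4 (d i))
    (hdist : ∀ i j, i ≠ j → d i ≠ d j)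
    (horth : ∀ i j, i ≠ j → bDP4 (d i) (d j) = 0) :
    ∃! q : Fin 6 → ℤ, IsLineClassDP4 q ∧ ∀ i, bDP4 q (d i) = 1 := by
  have hmem : ∀ i, d i ∈ linesDP4 := fun i => mem_linesDP4 _ (hline i)
  obtain ⟨q, hqmem, ⟨m1, m2, m3, m4, m5⟩, huniq⟩ :=
    keyDP4 (d 0) (hmem 0) (d 1) (hmem 1) (horth 0 1 (by decide))
      (d 2) (hmem 2) (horth 0 2 (by decide)) (horth 1 2 (by decide))
      (d 3) (hmem 3) (horth 0 3 (by decide)) (horth 1 3 (by decide)) (horth 2 3 (by decide))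
      (d 4) (hmem 4) (horth 0 4 (by decide)) (horth 1 4 (by decide)) (horth 2 4 (by decide))
      (horth 3 4 (by decide))
  refine ⟨q, ⟨lines_isLineDP4 q hqmem, ?_⟩, ?_⟩
  · intro i; fin_cases i
    exacts [m1, m2, m3, m4, m5]
  · rintro q' ⟨hq'line, hq'meet⟩
    exact huniq q' (mem_linesDP4 q' hq'line)
      ⟨hq'meet 0, hq'meet 1, hq'meet 2, hq'meet 3, hq'meet 4⟩
end

section
/- Fix a line class E₀ in the cubic surface lattice, put f = −k₃ − E₀, and let Fib be the set of line classes g with b(g,f) = 0. Then for every g ∈ Fib the element f − g again lies in Fib, f − g ≠ g, and b(g, f − g) = 1; thus the map g ↦ f − g is a fixed-point-free involution of the 10-element set Fib, partitioning it into 5 pairs. (The 10 lines lying in fibers of the conic bundle on a cubic surface pair up into the 5 degenerate fibers E ∪ F with E + F equal to the fiber class.) -/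
/-- The intersection form of the cubic surface lattice `L₃ = ℤ⁷`, with basis
`ℓ` (coordinate 0) and `e₁, …, e₆` (coordinates 1–6):
`b ℓ ℓ = 1`, `b ℓ eᵢ = 0`, `b eᵢ eᵢ = -1`, `b eᵢ eⱼ = 0` for `i ≠ j`. -/
def bC (x y : Fin 7 → ℤ) : ℤ := x 0 * y 0 - ∑ i : Fin 6, x i.succ * y i.succ

/-- The canonical class `k₃ = -3ℓ + e₁ + ⋯ + e₆`. -/
def kC : Fin 7 → ℤ := ![-3, 1, 1, 1, 1, 1, 1]

/-- A line class: `d` with `b d d = -1` and `b d k₃ = -1`. -/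
def IsLineClassC (d : Fin 7 → ℤ) : Prop := bC d d = -1 ∧ bC d kC = -1

/-- The 27 line classes, explicitly. -/
def vecsAux : List (Fin 7 → ℤ) :=
  [![0,1,0,0,0,0,0], ![0,0,1,0,0,0,0], ![0,0,0,1,0,0,0], ![0,0,0,0,1,0,0],
   ![0,0,0,0,0,1,0], ![0,0,0,0,0,0,1],
   ![1,-1,-1,0,0,0,0], ![1,-1,0,-1,0,0,0], ![1,-1,0,0,-1,0,0], ![1,-1,0,0,0,-1,0],
   ![1,-1,0,0,0,0,-1], ![1,0,-1,-1,0,0,0], ![1,0,-1,0,-1,0,0], ![1,0,-1,0,0,-1,0],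
   ![1,0,-1,0,0,0,-1], ![1,0,0,-1,-1,0,0], ![1,0,0,-1,0,-1,0], ![1,0,0,-1,0,0,-1],
   ![1,0,0,0,-1,-1,0], ![1,0,0,0,-1,0,-1], ![1,0,0,0,0,-1,-1],
   ![2,0,-1,-1,-1,-1,-1], ![2,-1,0,-1,-1,-1,-1], ![2,-1,-1,0,-1,-1,-1],
   ![2,-1,-1,-1,0,-1,-1], ![2,-1,-1,-1,-1,0,-1], ![2,-1,-1,-1,-1,-1,0]]

lemma bC_expand_aux (x y : Fin 7 → ℤ) : bC x y =
    x 0 * y 0 - (x 1 * y 1 + x 2 * y 2 + x 3 * y 3 + x 4 * y 4 + x 5 * y 5 + x 6 * y 6) := by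
  simp only [bC, Fin.sum_univ_six,
    show ((0:Fin 6).succ = (1:Fin 7)) from rfl, show ((1:Fin 6).succ = (2:Fin 7)) from rfl,
    show ((2:Fin 6).succ = (3:Fin 7)) from rfl, show ((3:Fin 6).succ = (4:Fin 7)) from rfl,
    show ((4:Fin 6).succ = (5:Fin 7)) from rfl, show ((5:Fin 6).succ = (6:Fin 7)) from rfl]

lemma int_self_le_sq_aux (t : ℤ) : t ≤ t * t := by
  have h := mul_self_nonneg (t - 1); nlinarith
lemma int_neg_le_sq_aux (t : ℤ) : -t ≤ t * t := by
  have h := mul_self_nonneg (t + 1); nlinarith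
lemma binary01_aux (t : ℤ) (h : t * t = t) : t = 0 ∨ t = 1 := by
  have : t * (t - 1) = 0 := by linarith [mul_sub t t 1]
  rcases mul_eq_zero.mp this with h' | h'
  · exact Or.inl h'
  · right; linarith
lemma binary0neg_aux (t : ℤ) (h : t * t = -t) : t = 0 ∨ t = -1 := by
  have : t * (t + 1) = 0 := by linarith [mul_add t t 1]
  rcases mul_eq_zero.mp this with h' | h'
  · exact Or.inl h'
  · right; linarith

lemma classify_aux (d : Fin 7 → ℤ) (h : IsLineClassC d) : d ∈ vecsAux := by
  obtain ⟨h1, h2⟩ := h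
  rw [bC_expand_aux] at h1 h2
  simp only [show kC 0 = -3 from rfl, show kC 1 = 1 from rfl, show kC 2 = 1 from rfl,
    show kC 3 = 1 from rfl, show kC 4 = 1 from rfl, show kC 5 = 1 from rfl,
    show kC 6 = 1 from rfl] at h2
  have hd : d = ![d 0, d 1, d 2, d 3, d 4, d 5, d 6] := by
    funext i; fin_cases i <;> rfl
  have key : 6 * (d 1 * d 1 + d 2 * d 2 + d 3 * d 3 + d 4 * d 4 + d 5 * d 5 + d 6 * d 6)
      - (d 1 + d 2 + d 3 + d 4 + d 5 + d 6)^2 =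
      (d 1 - d 2)^2 + (d 1 - d 3)^2 + (d 1 - d 4)^2 + (d 1 - d 5)^2 + (d 1 - d 6)^2 +
      (d 2 - d 3)^2 + (d 2 - d 4)^2 + (d 2 - d 5)^2 + (d 2 - d 6)^2 +
      (d 3 - d 4)^2 + (d 3 - d 5)^2 + (d 3 - d 6)^2 +
      (d 4 - d 5)^2 + (d 4 - d 6)^2 + (d 5 - d 6)^2 := by ring
  have hge : 6 * (d 1 * d 1 + d 2 * d 2 + d 3 * d 3 + d 4 * d 4 + d 5 * d 5 + d 6 * d 6)
      - (d 1 + d 2 + d 3 + d 4 + d 5 + d 6)^2 ≥ 0 := by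
    rw [key]; positivity
  have hS : d 1 + d 2 + d 3 + d 4 + d 5 + d 6 = 1 - 3 * d 0 := by linarith
  have hQ : d 1 * d 1 + d 2 * d 2 + d 3 * d 3 + d 4 * d 4 + d 5 * d 5 + d 6 * d 6
      = d 0 * d 0 + 1 := by linarith
  rw [hS, hQ] at hge
  have e1 : (1 - 3 * d 0)^2 = 1 - 6 * d 0 + 9 * (d 0 * d 0) := by ring
  rw [e1] at hge
  have p1 : (d 0 + 1) * (d 0 + 1) ≥ 0 := mul_self_nonneg _
  have p2 : (d 0 - 2) * (d 0 - 2) ≥ 0 := mul_self_nonneg _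
  have e2 : (d 0 + 1) * (d 0 + 1) = d 0 * d 0 + 2 * d 0 + 1 := by ring
  have e3 : (d 0 - 2) * (d 0 - 2) = d 0 * d 0 - 4 * d 0 + 4 := by ring
  rw [e2] at p1; rw [e3] at p2
  have ha : d 0 = 0 ∨ d 0 = 1 ∨ d 0 = 2 := by
    have l1 : 12 * d 0 ≥ -8 := by linarith
    have l2 : 6 * d 0 ≤ 17 := by linarith
    omega
  rw [hd]
  rcases ha with h0 | h0 | h0
  · rw [h0] at hS hQ
    have q1 := int_self_le_sq_aux (d 1); have q2 := int_self_le_sq_aux (d 2)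
    have q3 := int_self_le_sq_aux (d 3); have q4 := int_self_le_sq_aux (d 4)
    have q5 := int_self_le_sq_aux (d 5); have q6 := int_self_le_sq_aux (d 6)
    have b1 := binary01_aux (d 1) (by linarith); have b2 := binary01_aux (d 2) (by linarith)
    have b3 := binary01_aux (d 3) (by linarith); have b4 := binary01_aux (d 4) (by linarith)
    have b5 := binary01_aux (d 5) (by linarith); have b6 := binary01_aux (d 6) (by linarith)
    rcases b1 with c1|c1 <;> rcases b2 with c2|c2 <;> rcases b3 with c3|c3 <;>
      rcases b4 with c4|c4 <;> rcases b5 with c5|c5 <;> rcases b6 with c6|c6 <;>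
      first
        | omega
        | (rw [h0, c1, c2, c3, c4, c5, c6]; decide)
  · rw [h0] at hS hQ
    have q1 := int_neg_le_sq_aux (d 1); have q2 := int_neg_le_sq_aux (d 2)
    have q3 := int_neg_le_sq_aux (d 3); have q4 := int_neg_le_sq_aux (d 4)
    have q5 := int_neg_le_sq_aux (d 5); have q6 := int_neg_le_sq_aux (d 6)
    have b1 := binary0neg_aux (d 1) (by linarith); have b2 := binary0neg_aux (d 2) (by linarith)
    have b3 := binary0neg_aux (d 3) (by linarith); have b4 := binary0neg_aux (d 4) (by linarith)
    have b5 := binary0neg_aux (d 5) (by linarith); have b6 := binary0neg_aux (d 6) (by linarith)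
    rcases b1 with c1|c1 <;> rcases b2 with c2|c2 <;> rcases b3 with c3|c3 <;>
      rcases b4 with c4|c4 <;> rcases b5 with c5|c5 <;> rcases b6 with c6|c6 <;>
      first
        | omega
        | (rw [h0, c1, c2, c3, c4, c5, c6]; decide)
  · rw [h0] at hS hQ
    have q1 := int_neg_le_sq_aux (d 1); have q2 := int_neg_le_sq_aux (d 2)
    have q3 := int_neg_le_sq_aux (d 3); have q4 := int_neg_le_sq_aux (d 4)
    have q5 := int_neg_le_sq_aux (d 5); have q6 := int_neg_le_sq_aux (d 6)
    have b1 := binary0neg_aux (d 1) (by linarith); have b2 := binary0neg_aux (d 2) (by linarith)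
    have b3 := binary0neg_aux (d 3) (by linarith); have b4 := binary0neg_aux (d 4) (by linarith)
    have b5 := binary0neg_aux (d 5) (by linarith); have b6 := binary0neg_aux (d 6) (by linarith)
    rcases b1 with c1|c1 <;> rcases b2 with c2|c2 <;> rcases b3 with c3|c3 <;>
      rcases b4 with c4|c4 <;> rcases b5 with c5|c5 <;> rcases b6 with c6|c6 <;>
      first
        | omega
        | (rw [h0, c1, c2, c3, c4, c5, c6]; decide)

lemma vecsAux_line : ∀ v ∈ vecsAux, IsLineClassC v := by
  simp only [IsLineClassC]; decide

lemma vecsAux_nodup : vecsAux.Nodup := by decide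

lemma vecsAux_count : ∀ v ∈ vecsAux,
    ((vecsAux.filter (fun g => decide (bC g (-kC - v) = 0))).length) = 10 := by decide

/-- fix a line class `E₀`, put `f = -k₃ - E₀`, and let
`Fib = {g | IsLineClassC g ∧ b g f = 0}`. Then `Fib` has 10 elements and for each
`g ∈ Fib` the element `f - g` again lies in `Fib`, `f - g ≠ g`, `b g (f - g) = 1`
and `f - (f - g) = g`: the map `g ↦ f - g` is a fixed-point-free involution of the
10-element set `Fib`, partitioning it into 5 pairs (the 5 degenerate fibers). -/
theorem stmt_13 (E₀ : Fin 7 → ℤ) (hE₀ : IsLineClassC E₀) :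
    {g : Fin 7 → ℤ | IsLineClassC g ∧ bC g (-kC - E₀) = 0}.ncard = 10 ∧
    ∀ g, IsLineClassC g → bC g (-kC - E₀) = 0 →
      (IsLineClassC ((-kC - E₀) - g) ∧ bC ((-kC - E₀) - g) (-kC - E₀) = 0 ∧
        (-kC - E₀) - g ≠ g ∧ bC g ((-kC - E₀) - g) = 1 ∧
        (-kC - E₀) - ((-kC - E₀) - g) = g) := by
  constructor
  · -- counting part
    have hset : {g : Fin 7 → ℤ | IsLineClassC g ∧ bC g (-kC - E₀) = 0} =
        ↑((vecsAux.filter (fun g => decide (bC g (-kC - E₀) = 0))).toFinset) := by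
      ext x
      simp only [Set.mem_setOf_eq, Finset.coe_sort_coe, List.coe_toFinset, Set.mem_setOf_eq,
        List.mem_filter, decide_eq_true_eq]
      constructor
      · rintro ⟨hx, hb⟩
        exact ⟨classify_aux x hx, hb⟩
      · rintro ⟨hx, hb⟩
        exact ⟨vecsAux_line x hx, hb⟩
    rw [hset, Set.ncard_coe_finset,
      List.toFinset_card_of_nodup (vecsAux_nodup.filter _)]
    exact vecsAux_count E₀ (classify_aux E₀ hE₀)
  · intro g hg hgf
    obtain ⟨hE1, hE2⟩ := hE₀
    obtain ⟨hg1, hg2⟩ := hg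
    have hk : ∀ x, bC x kC = -3 * x 0 - (x 1 + x 2 + x 3 + x 4 + x 5 + x 6) := by
      intro x
      rw [bC_expand_aux]
      simp only [show kC 0 = -3 from rfl, show kC 1 = 1 from rfl, show kC 2 = 1 from rfl,
        show kC 3 = 1 from rfl, show kC 4 = 1 from rfl, show kC 5 = 1 from rfl,
        show kC 6 = 1 from rfl]
      ring
    rw [hk] at hE2 hg2
    rw [bC_expand_aux] at hE1 hg1 hgf
    simp only [Pi.sub_apply, Pi.neg_apply, show kC 0 = -3 from rfl, show kC 1 = 1 from rfl,
      show kC 2 = 1 from rfl, show kC 3 = 1 from rfl, show kC 4 = 1 from rfl,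
      show kC 5 = 1 from rfl, show kC 6 = 1 from rfl] at hgf
    have hbgg : bC g ((-kC - E₀) - g) = 1 := by
      rw [bC_expand_aux]
      simp only [Pi.sub_apply, Pi.neg_apply, show kC 0 = -3 from rfl, show kC 1 = 1 from rfl,
        show kC 2 = 1 from rfl, show kC 3 = 1 from rfl, show kC 4 = 1 from rfl,
        show kC 5 = 1 from rfl, show kC 6 = 1 from rfl]
      linear_combination hgf - hg1
    refine ⟨⟨?_, ?_⟩, ?_, ?_, hbgg, sub_sub_cancel _ _⟩
    · rw [bC_expand_aux]
      simp only [Pi.sub_apply, Pi.neg_apply, show kC 0 = -3 from rfl, show kC 1 = 1 from rfl,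
        show kC 2 = 1 from rfl, show kC 3 = 1 from rfl, show kC 4 = 1 from rfl,
        show kC 5 = 1 from rfl, show kC 6 = 1 from rfl]
      linear_combination hE1 + 2 * hE2 + hg1 - 2 * hgf
    · rw [hk]
      simp only [Pi.sub_apply, Pi.neg_apply, show kC 0 = -3 from rfl, show kC 1 = 1 from rfl,
        show kC 2 = 1 from rfl, show kC 3 = 1 from rfl, show kC 4 = 1 from rfl,
        show kC 5 = 1 from rfl, show kC 6 = 1 from rfl]
      linear_combination -hE2 - hg2
    · rw [bC_expand_aux]
      simp only [Pi.sub_apply, Pi.neg_apply, show kC 0 = -3 from rfl, show kC 1 = 1 from rfl,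
        show kC 2 = 1 from rfl, show kC 3 = 1 from rfl, show kC 4 = 1 from rfl,
        show kC 5 = 1 from rfl, show kC 6 = 1 from rfl]
      linear_combination hE1 + 2 * hE2 - hgf
    · intro h
      rw [h, bC_expand_aux] at hbgg
      linarith
end

section
/- Fix a line class E₀ in the cubic surface lattice, put f = −k₃ − E₀, let Fib be the set of line classes g with b(g,f) = 0 and Sec the set of line classes A with b(A,f) = 1. Let T ⊆ Fib be a subset containing exactly one element of each of the 5 pairs {g, f − g}. Then there exists ε ∈ ℤ/2ℤ such that the map A ↦ {g ∈ T : b(A,g) = 1} is a bijection from Sec onto the collection of subsets of T whose cardinality is congruent to ε modulo 2. (Lattice form of Corollaries 3.2–3.3 and Lemma 3.6 of the paper: given a marking of the conic bundle on a cubic surface, the 16 sections with self-intersection −1 correspond bijectively to the subsets of the chosen degenerate-fiber components of a fixed parity; in particular, if some section meets an odd number of chosen components, there is a unique section meeting all five and, for each i, a unique section meeting exactly the i-th one.) -/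
def LC : Finset (Fin 7 → ℤ) := {![0,1,0,0,0,0,0], ![0,0,1,0,0,0,0], ![0,0,0,1,0,0,0], ![0,0,0,0,1,0,0], ![0,0,0,0,0,1,0], ![0,0,0,0,0,0,1], ![1,-1,-1,0,0,0,0], ![1,-1,0,-1,0,0,0], ![1,-1,0,0,-1,0,0], ![1,-1,0,0,0,-1,0], ![1,-1,0,0,0,0,-1], ![1,0,-1,-1,0,0,0], ![1,0,-1,0,-1,0,0], ![1,0,-1,0,0,-1,0], ![1,0,-1,0,0,0,-1], ![1,0,0,-1,-1,0,0], ![1,0,0,-1,0,-1,0], ![1,0,0,-1,0,0,-1], ![1,0,0,0,-1,-1,0], ![1,0,0,0,-1,0,-1], ![1,0,0,0,0,-1,-1], ![2,0,-1,-1,-1,-1,-1], ![2,-1,0,-1,-1,-1,-1], ![2,-1,-1,0,-1,-1,-1], ![2,-1,-1,-1,0,-1,-1], ![2,-1,-1,-1,-1,0,-1], ![2,-1,-1,-1,-1,-1,0]}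

set_option maxHeartbeats 1000000 in
lemma LCline : ∀ d ∈ LC, bC d d = -1 ∧ bC d kC = -1 := by decide

set_option maxHeartbeats 1000000 in
lemma D1 : ∀ E ∈ LC, ∃ A ∈ LC, bC A (-kC - E) = 1 := by decide

set_option maxHeartbeats 4000000 in
lemma D3 : ∀ E ∈ LC, ∀ g ∈ LC, ∀ h ∈ LC,
    bC g (-kC - E) = 0 → bC h (-kC - E) = 0 → h ≠ g → h ≠ (-kC - E) - g → bC g h = 0 := by decide

set_option maxHeartbeats 4000000 in
lemma D4 : ∀ E ∈ LC, ∀ A ∈ LC, ∀ g ∈ LC,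
    bC A (-kC - E) = 1 → bC g (-kC - E) = 0 → bC A g = 0 ∨ bC A g = 1 := by decide

set_option maxHeartbeats 8000000 in
lemma D6 : ∀ E ∈ LC, ∀ A ∈ LC, ∀ B ∈ LC,
    bC A (-kC - E) = 1 → bC B (-kC - E) = 1 →
    (∀ g ∈ LC, bC g (-kC - E) = 0 → bC A g = bC B g) → A = B := by decide

set_option maxHeartbeats 1000000 in
lemma Dcard : ∀ E ∈ LC, (LC.filter (fun A => bC A (-kC - E) = 1)).card = 16 ∧
    (LC.filter (fun g => bC g (-kC - E) = 0)).card = 10 := by decide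

set_option maxRecDepth 100000 in
set_option maxHeartbeats 2000000 in
lemma EXH : ∀ a ∈ Finset.Icc (0:ℤ) 2, ∀ b1 ∈ Finset.Icc (-1:ℤ) 1, ∀ b2 ∈ Finset.Icc (-1:ℤ) 1,
    ∀ b3 ∈ Finset.Icc (-1:ℤ) 1, ∀ b4 ∈ Finset.Icc (-1:ℤ) 1, ∀ b5 ∈ Finset.Icc (-1:ℤ) 1,
    ∀ b6 ∈ Finset.Icc (-1:ℤ) 1,
    bC ![a,b1,b2,b3,b4,b5,b6] ![a,b1,b2,b3,b4,b5,b6] = -1 →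
    bC ![a,b1,b2,b3,b4,b5,b6] kC = -1 → ![a,b1,b2,b3,b4,b5,b6] ∈ LC := by decide


lemma a_bound (a : ℤ) (h : 0 ≤ 6*(a*a+1) - (1-3*a)^2) : 0 ≤ a ∧ a ≤ 2 :=
  ⟨by nlinarith [sq_nonneg (a+1)], by nlinarith [sq_nonneg (a-3)]⟩

lemma coord_bound (a b : ℤ) (ha0 : 0 ≤ a) (ha2 : a ≤ 2)
    (hP : 0 ≤ 5*(a*a+1-b*b) - (1-3*a-b)^2) : -1 ≤ b ∧ b ≤ 1 := by
  constructor
  · nlinarith [sq_nonneg (a-2), sq_nonneg (b+2), mul_nonneg ha0 (by linarith : (0:ℤ) ≤ 2 - a)]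
  · nlinarith [sq_nonneg (b-2), mul_nonneg ha0 ha0]

set_option maxHeartbeats 1600000 in
lemma classify (d : Fin 7 → ℤ) (hd : IsLineClassC d) : d ∈ LC := by
  obtain ⟨a, b1, b2, b3, b4, b5, b6, rfl⟩ :
      ∃ a b1 b2 b3 b4 b5 b6, d = ![a, b1, b2, b3, b4, b5, b6] :=
    ⟨d 0, d 1, d 2, d 3, d 4, d 5, d 6, by funext i; fin_cases i <;> rfl⟩
  obtain ⟨h1, h2⟩ := hd
  have h1' := h1
  have h2' := h2
  simp only [bC, Fin.sum_univ_six,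
    show (Fin.succ 0 : Fin 7) = 1 from rfl, show (Fin.succ 1 : Fin 7) = 2 from rfl,
    show (Fin.succ 2 : Fin 7) = 3 from rfl, show (Fin.succ 3 : Fin 7) = 4 from rfl,
    show (Fin.succ 4 : Fin 7) = 5 from rfl, show (Fin.succ 5 : Fin 7) = 6 from rfl,
    show kC 0 = -3 from rfl, show kC 1 = 1 from rfl, show kC 2 = 1 from rfl,
    show kC 3 = 1 from rfl, show kC 4 = 1 from rfl, show kC 5 = 1 from rfl,
    show kC 6 = 1 from rfl,
    show (![a, b1, b2, b3, b4, b5, b6] : Fin 7 → ℤ) 0 = a from rfl,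
    show (![a, b1, b2, b3, b4, b5, b6] : Fin 7 → ℤ) 1 = b1 from rfl,
    show (![a, b1, b2, b3, b4, b5, b6] : Fin 7 → ℤ) 2 = b2 from rfl,
    show (![a, b1, b2, b3, b4, b5, b6] : Fin 7 → ℤ) 3 = b3 from rfl,
    show (![a, b1, b2, b3, b4, b5, b6] : Fin 7 → ℤ) 4 = b4 from rfl,
    show (![a, b1, b2, b3, b4, b5, b6] : Fin 7 → ℤ) 5 = b5 from rfl,
    show (![a, b1, b2, b3, b4, b5, b6] : Fin 7 → ℤ) 6 = b6 from rfl] at h1 h2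
  have hq : b1*b1 + b2*b2 + b3*b3 + b4*b4 + b5*b5 + b6*b6 = a*a + 1 := by linarith
  have hs : b1 + b2 + b3 + b4 + b5 + b6 = 1 - 3*a := by linarith
  have key : (b1-b2)^2 + (b1-b3)^2 + (b1-b4)^2 + (b1-b5)^2 + (b1-b6)^2 + (b2-b3)^2
      + (b2-b4)^2 + (b2-b5)^2 + (b2-b6)^2 + (b3-b4)^2 + (b3-b5)^2 + (b3-b6)^2
      + (b4-b5)^2 + (b4-b6)^2 + (b5-b6)^2 = 6*(a*a+1) - (1-3*a)^2 := by
    linear_combination 6*hq - (b1+b2+b3+b4+b5+b6 + 1 - 3*a)*hs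
  have keypos : (0:ℤ) <= 6*(a*a+1) - (1-3*a)^2 := by rw [<- key]; positivity
  obtain ⟨ha0, ha2⟩ := a_bound a keypos
  have key1 : (b2-b3)^2 + (b2-b4)^2 + (b2-b5)^2 + (b2-b6)^2 + (b3-b4)^2 + (b3-b5)^2 + (b3-b6)^2 + (b4-b5)^2 + (b4-b6)^2 + (b5-b6)^2 = 5*(a*a+1-b1*b1) - (1-3*a-b1)^2 := by
    linear_combination 5*hq - (b2+b3+b4+b5+b6 + 1 - 3*a - b1)*hs
  obtain ⟨hL1, hU1⟩ := coord_bound a b1 ha0 ha2 (by rw [<- key1]; positivity)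
  have key2 : (b1-b3)^2 + (b1-b4)^2 + (b1-b5)^2 + (b1-b6)^2 + (b3-b4)^2 + (b3-b5)^2 + (b3-b6)^2 + (b4-b5)^2 + (b4-b6)^2 + (b5-b6)^2 = 5*(a*a+1-b2*b2) - (1-3*a-b2)^2 := by
    linear_combination 5*hq - (b1+b3+b4+b5+b6 + 1 - 3*a - b2)*hs
  obtain ⟨hL2, hU2⟩ := coord_bound a b2 ha0 ha2 (by rw [<- key2]; positivity)
  have key3 : (b1-b2)^2 + (b1-b4)^2 + (b1-b5)^2 + (b1-b6)^2 + (b2-b4)^2 + (b2-b5)^2 + (b2-b6)^2 + (b4-b5)^2 + (b4-b6)^2 + (b5-b6)^2 = 5*(a*a+1-b3*b3) - (1-3*a-b3)^2 := by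
    linear_combination 5*hq - (b1+b2+b4+b5+b6 + 1 - 3*a - b3)*hs
  obtain ⟨hL3, hU3⟩ := coord_bound a b3 ha0 ha2 (by rw [<- key3]; positivity)
  have key4 : (b1-b2)^2 + (b1-b3)^2 + (b1-b5)^2 + (b1-b6)^2 + (b2-b3)^2 + (b2-b5)^2 + (b2-b6)^2 + (b3-b5)^2 + (b3-b6)^2 + (b5-b6)^2 = 5*(a*a+1-b4*b4) - (1-3*a-b4)^2 := by
    linear_combination 5*hq - (b1+b2+b3+b5+b6 + 1 - 3*a - b4)*hs
  obtain ⟨hL4, hU4⟩ := coord_bound a b4 ha0 ha2 (by rw [<- key4]; positivity)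
  have key5 : (b1-b2)^2 + (b1-b3)^2 + (b1-b4)^2 + (b1-b6)^2 + (b2-b3)^2 + (b2-b4)^2 + (b2-b6)^2 + (b3-b4)^2 + (b3-b6)^2 + (b4-b6)^2 = 5*(a*a+1-b5*b5) - (1-3*a-b5)^2 := by
    linear_combination 5*hq - (b1+b2+b3+b4+b6 + 1 - 3*a - b5)*hs
  obtain ⟨hL5, hU5⟩ := coord_bound a b5 ha0 ha2 (by rw [<- key5]; positivity)
  have key6 : (b1-b2)^2 + (b1-b3)^2 + (b1-b4)^2 + (b1-b5)^2 + (b2-b3)^2 + (b2-b4)^2 + (b2-b5)^2 + (b3-b4)^2 + (b3-b5)^2 + (b4-b5)^2 = 5*(a*a+1-b6*b6) - (1-3*a-b6)^2 := by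
    linear_combination 5*hq - (b1+b2+b3+b4+b5 + 1 - 3*a - b6)*hs
  obtain ⟨hL6, hU6⟩ := coord_bound a b6 ha0 ha2 (by rw [<- key6]; positivity)
  exact EXH a (Finset.mem_Icc.mpr ⟨ha0, ha2⟩) b1 (Finset.mem_Icc.mpr ⟨hL1, hU1⟩)
    b2 (Finset.mem_Icc.mpr ⟨hL2, hU2⟩) b3 (Finset.mem_Icc.mpr ⟨hL3, hU3⟩)
    b4 (Finset.mem_Icc.mpr ⟨hL4, hU4⟩) b5 (Finset.mem_Icc.mpr ⟨hL5, hU5⟩)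
    b6 (Finset.mem_Icc.mpr ⟨hL6, hU6⟩) h1' h2'

lemma bC_add_left (x y z : Fin 7 → ℤ) : bC (x + y) z = bC x z + bC y z := by
  simp only [bC, Pi.add_apply, add_mul]
  rw [Finset.sum_add_distrib]; ring

lemma bC_sub_left (x y z : Fin 7 → ℤ) : bC (x - y) z = bC x z - bC y z := by
  simp only [bC, Pi.sub_apply, sub_mul]
  rw [Finset.sum_sub_distrib]; ring

lemma bC_neg_left (x z : Fin 7 → ℤ) : bC (-x) z = -bC x z := by
  simp only [bC, Pi.neg_apply, neg_mul]
  rw [Finset.sum_neg_distrib]; ring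

lemma bC_comm (x y : Fin 7 → ℤ) : bC x y = bC y x := by
  simp only [bC]
  congr 1
  · ring
  · exact Finset.sum_congr rfl fun i _ => mul_comm _ _

lemma bC_add_right (x y z : Fin 7 → ℤ) : bC z (x + y) = bC z x + bC z y := by
  rw [bC_comm, bC_add_left, bC_comm x z, bC_comm y z]

lemma bC_sub_right (x y z : Fin 7 → ℤ) : bC z (x - y) = bC z x - bC z y := by
  rw [bC_comm, bC_sub_left, bC_comm x z, bC_comm y z]

lemma bC_neg_right (x z : Fin 7 → ℤ) : bC z (-x) = -bC z x := by
  rw [bC_comm, bC_neg_left, bC_comm x z]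

lemma bC_addsub (A x y z : Fin 7 → ℤ) : bC (A + x - y) z = bC A z + bC x z - bC y z := by
  rw [bC_sub_left, bC_add_left]

lemma flip_core (f A x y : Fin 7 → ℤ)
    (hAA : bC A A = -1) (hAk : bC A kC = -1) (hAf : bC A f = 1)
    (hxx : bC x x = -1) (hxk : bC x kC = -1) (hxf : bC x f = 0)
    (hyy : bC y y = -1) (hyk : bC y kC = -1) (hyf : bC y f = 0)
    (hxy : bC x y = 0) (hAx : bC A x = 1) (hAy : bC A y = 0) :
    IsLineClassC (A + x - y) ∧ bC (A + x - y) f = 1 ∧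
      (∀ z, bC (A + x - y) z = bC A z + bC x z - bC y z) := by
  have hfA : bC f A = 1 := by rw [bC_comm]; exact hAf
  have e : ∀ z, bC (A + x - y) z = bC A z + bC x z - bC y z := fun z => bC_addsub A x y z
  refine ⟨⟨?_, ?_⟩, ?_, e⟩
  · rw [e, bC_sub_right, bC_add_right, bC_sub_right, bC_add_right, bC_sub_right, bC_add_right,
      bC_comm x A, bC_comm y A, bC_comm y x]
    omega
  · rw [e]; omega
  · rw [e]; omega

open scoped symmDiff

set_option maxHeartbeats 1000000 in
/-- lattice form of Corollaries 3.2–3.3 and Lemma 3.6 of the paper: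
fix a line class `E₀`, put `f = -k₃ - E₀`, let `Fib` be the line classes `g` with
`b g f = 0` and `Sec` the line classes `A` with `b A f = 1`. If `T ⊆ Fib` contains
exactly one element of each pair `{g, f - g}`, then there is `ε : ZMod 2` such that
`A ↦ {g ∈ T | b A g = 1}` is a bijection from `Sec` onto the subsets of `T` whose
cardinality is `ε` mod 2. -/
theorem stmt_14 (E₀ : Fin 7 → ℤ) (hE₀ : IsLineClassC E₀)
    (T : Set (Fin 7 → ℤ))
    (hT : T ⊆ {g : Fin 7 → ℤ | IsLineClassC g ∧ bC g (-kC - E₀) = 0})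
    (hT' : ∀ g : Fin 7 → ℤ, IsLineClassC g → bC g (-kC - E₀) = 0 →
      (g ∈ T ↔ (-kC - E₀) - g ∉ T)) :
    ∃ ε : ZMod 2,
      Set.BijOn (fun A : Fin 7 → ℤ => {g ∈ T | bC A g = 1})
        {A : Fin 7 → ℤ | IsLineClassC A ∧ bC A (-kC - E₀) = 1}
        {U : Set (Fin 7 → ℤ) | U ⊆ T ∧ (U.ncard : ZMod 2) = ε} := by
  classical
  obtain ⟨hE1, hE2⟩ := hE₀
  have hE0LC : E₀ ∈ LC := classify E₀ ⟨hE1, hE2⟩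
  set f : Fin 7 → ℤ := -kC - E₀ with hfdef
  have D1' := D1 E₀ hE0LC
  have D3' := D3 E₀ hE0LC
  have D4' := D4 E₀ hE0LC
  have D6' := D6 E₀ hE0LC
  have Dc := Dcard E₀ hE0LC
  rw [← hfdef] at D1' D3' D4' D6' Dc
  have lineOf : ∀ {x : Fin 7 → ℤ}, x ∈ LC → IsLineClassC x := fun h => ⟨(LCline _ h).1, (LCline _ h).2⟩
  -- numeric facts about f
  have hkk : bC kC kC = 3 := by decide
  have hff : bC f f = 0 := by
    rw [hfdef]
    simp only [bC_sub_left, bC_sub_right, bC_neg_left, bC_neg_right]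
    rw [bC_comm kC E₀]
    omega
  have hfkC : bC f kC = -2 := by
    rw [hfdef]
    simp only [bC_sub_left, bC_neg_left]
    omega
  -- pair facts
  have pair : ∀ g, IsLineClassC g → bC g f = 0 →
      IsLineClassC (f - g) ∧ bC (f - g) f = 0 ∧ bC (f - g) g = 1 ∧ bC g (f - g) = 1 ∧ f - g ≠ g := by
    intro g hg hgf
    obtain ⟨hg1, hg2⟩ := hg
    have hfg : bC f g = 0 := by rw [bC_comm]; exact hgf
    have e1 : bC (f - g) (f - g) = -1 := by
      simp only [bC_sub_left, bC_sub_right]; omega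
    have e2 : bC (f - g) kC = -1 := by simp only [bC_sub_left]; omega
    have e3 : bC (f - g) f = 0 := by simp only [bC_sub_left]; omega
    have e4 : bC (f - g) g = 1 := by simp only [bC_sub_left]; omega
    have e5 : bC g (f - g) = 1 := by rw [bC_comm]; exact e4
    refine ⟨⟨e1, e2⟩, e3, e4, e5, fun hgg => ?_⟩
    rw [hgg] at e4; omega
  have secpair : ∀ A g, bC A f = 1 → bC A (f - g) = 1 - bC A g := by
    intro A g hAf
    rw [bC_sub_right, hAf]
  -- T as a Finset
  have memLC : ∀ {x : Fin 7 → ℤ}, IsLineClassC x → x ∈ LC := fun h => classify _ h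
  set Tf : Finset (Fin 7 → ℤ) := LC.filter (· ∈ T) with hTfdef
  have hTfmem : ∀ g : Fin 7 → ℤ, g ∈ Tf ↔ g ∈ T := by
    intro g
    rw [hTfdef, Finset.mem_filter]
    exact ⟨fun h => h.2, fun h => ⟨memLC (hT h).1, h⟩⟩
  have hTcoe : (Tf : Set (Fin 7 → ℤ)) = T := by
    ext x; rw [Finset.mem_coe, hTfmem]
  have hTfline : ∀ g ∈ Tf, IsLineClassC g := fun g hg => (hT ((hTfmem g).1 hg)).1
  have hTffib : ∀ g ∈ Tf, bC g f = 0 := fun g hg => (hT ((hTfmem g).1 hg)).2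
  have hTfpair : ∀ g ∈ Tf, f - g ∉ Tf := by
    intro g hg
    rw [hTfmem]
    exact (hT' g (hTfline g hg) (hTffib g hg)).1 ((hTfmem g).1 hg)
  -- the fiber finset splits into Tf and its mirror
  set Fibf : Finset (Fin 7 → ℤ) := LC.filter (fun g => bC g f = 0) with hFibdef
  have hsub2 : ∀ g ∈ Tf, g ∈ Fibf := by
    intro g hg
    rw [hFibdef, Finset.mem_filter]
    exact ⟨memLC (hTfline g hg), hTffib g hg⟩
  have hsplit : Fibf = Tf ∪ Tf.image (fun g => f - g) := by
    ext g
    simp only [Finset.mem_union, Finset.mem_image]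
    constructor
    · intro hg
      rw [hFibdef, Finset.mem_filter] at hg
      obtain ⟨hgLC, hgf⟩ := hg
      by_cases hgT : g ∈ T
      · exact Or.inl ((hTfmem g).2 hgT)
      · refine Or.inr ⟨f - g, ?_, sub_sub_cancel f g⟩
        rw [hTfmem]
        exact not_not.mp (fun h => hgT ((hT' g (lineOf hgLC) hgf).mpr h))
    · intro hg
      rcases hg with hg | ⟨x, hx, rfl⟩
      · exact hsub2 g hg
      · rw [hFibdef, Finset.mem_filter]
        have p := pair x (hTfline x hx) (hTffib x hx)
        exact ⟨memLC p.1, p.2.1⟩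
  have hdisj : Disjoint Tf (Tf.image (fun g => f - g)) := by
    rw [Finset.disjoint_left]
    intro x hx hx'
    rw [Finset.mem_image] at hx'
    obtain ⟨h, hh, rfl⟩ := hx'
    exact hTfpair h hh hx
  have hT5 : Tf.card = 5 := by
    have h10 : Fibf.card = 10 := Dc.2
    rw [hsplit, Finset.card_union_of_disjoint hdisj,
      Finset.card_image_of_injective _ (sub_right_injective)] at h10
    omega
  -- the section pattern map
  set Sf : (Fin 7 → ℤ) → Finset (Fin 7 → ℤ) := fun A => Tf.filter (fun g => bC A g = 1) with hSfdef
  have hSfsub : ∀ A, Sf A ⊆ Tf := fun A => Finset.filter_subset _ _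
  have hSfmem : ∀ A g, g ∈ Sf A ↔ g ∈ Tf ∧ bC A g = 1 := by
    intro A g; rw [hSfdef]; exact Finset.mem_filter
  have hval : ∀ A ∈ LC, bC A f = 1 → ∀ g ∈ Tf, bC A g = 0 ∨ bC A g = 1 := by
    intro A hA hAf g hg
    exact D4' A hA g (memLC (hTfline g hg)) hAf (hTffib g hg)
  -- the elementary "flip two chosen pairs" move
  have flip : ∀ A, A ∈ LC → bC A f = 1 → ∀ g ∈ Tf, ∀ h ∈ Tf, g ≠ h →
      ∃ B, B ∈ LC ∧ bC B f = 1 ∧ Sf B = Sf A ∆ {g, h} := by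
    intro A hALC hAf g hg h hh hgh
    have hgl := hTfline g hg
    have hhl := hTfline h hh
    have hgf := hTffib g hg
    have hhf := hTffib h hh
    obtain ⟨pg1, pg2, pg3, pg4, pg5⟩ := pair g hgl hgf
    obtain ⟨ph1, ph2, ph3, ph4, ph5⟩ := pair h hhl hhf
    have n1 : h ≠ f - g := fun e => hTfpair g hg (e ▸ hh)
    have n2 : g ≠ f - h := fun e => hTfpair h hh (e ▸ hg)
    have n3 : f - h ≠ f - g := fun e => hgh (sub_right_injective e).symm
    have hAA := (LCline A hALC).1
    have hAk := (LCline A hALC).2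
    obtain ⟨x, hxeq, hxLC, hxf0, hxx, hxk, hAx, hxgval⟩ :
        ∃ x, (x = g ∨ x = f - g) ∧ x ∈ LC ∧ bC x f = 0 ∧ bC x x = -1 ∧ bC x kC = -1 ∧
          bC A x = 1 ∧ bC A g + bC x g = 1 - bC A g := by
      rcases hval A hALC hAf g hg with h0 | h1
      · refine ⟨f - g, Or.inr rfl, memLC pg1, pg2, pg1.1, pg1.2, ?_, by omega⟩
        rw [secpair A g hAf]; omega
      · have hgg := hgl.1
        exact ⟨g, Or.inl rfl, memLC hgl, hgf, hgl.1, hgl.2, h1, by omega⟩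
    obtain ⟨y, hyeq, hyLC, hyf0, hyy, hyk, hAy, hyhval⟩ :
        ∃ y, (y = h ∨ y = f - h) ∧ y ∈ LC ∧ bC y f = 0 ∧ bC y y = -1 ∧ bC y kC = -1 ∧
          bC A y = 0 ∧ bC A h - bC y h = 1 - bC A h := by
      rcases hval A hALC hAf h hh with h0 | h1
      · have hhh := hhl.1
        exact ⟨h, Or.inl rfl, memLC hhl, hhf, hhl.1, hhl.2, h0, by omega⟩
      · refine ⟨f - h, Or.inr rfl, memLC ph1, ph2, ph1.1, ph1.2, ?_, by omega⟩
        rw [secpair A h hAf]; omega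
    have hyx : y ≠ x := by
      rcases hxeq with hex | hex <;> rcases hyeq with hey | hey <;> rw [hex, hey]
      · exact hgh.symm
      · exact fun e => n2 e.symm
      · exact n1
      · exact n3
    have hyfx : y ≠ f - x := by
      rcases hxeq with hex | hex <;> rcases hyeq with hey | hey <;> rw [hex, hey]
      · exact n1
      · exact n3
      · rw [sub_sub_cancel]; exact hgh.symm
      · rw [sub_sub_cancel]; exact fun e => n2 e.symm
    have hxy : bC x y = 0 := D3' x hxLC y hyLC hxf0 hyf0 hyx hyfx
    obtain ⟨hBl, hBf, hBz⟩ := flip_core f A x y hAA hAk hAf hxx hxk hxf0 hyy hyk hyf0 hxy hAx hAy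
    refine ⟨A + x - y, memLC hBl, hBf, ?_⟩
    -- values on Tf
    have hxz : ∀ z ∈ Tf, z ≠ g → bC x z = 0 := by
      intro z hz hzg
      refine D3' x hxLC z (memLC (hTfline z hz)) hxf0 (hTffib z hz) ?_ ?_
      · rcases hxeq with hex | hex <;> rw [hex]
        · exact hzg
        · exact fun e => hTfpair g hg (e ▸ hz)
      · rcases hxeq with hex | hex <;> rw [hex]
        · exact fun e => hTfpair g hg (e ▸ hz)
        · rw [sub_sub_cancel]; exact hzg
    have hyz : ∀ z ∈ Tf, z ≠ h → bC y z = 0 := by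
      intro z hz hzh
      refine D3' y hyLC z (memLC (hTfline z hz)) hyf0 (hTffib z hz) ?_ ?_
      · rcases hyeq with hey | hey <;> rw [hey]
        · exact hzh
        · exact fun e => hTfpair h hh (e ▸ hz)
      · rcases hyeq with hey | hey <;> rw [hey]
        · exact fun e => hTfpair h hh (e ▸ hz)
        · rw [sub_sub_cancel]; exact hzh
    have hBg : bC (A + x - y) g = 1 - bC A g := by
      rw [hBz g, hyz g hg hgh]; omega
    have hBh : bC (A + x - y) h = 1 - bC A h := by
      rw [hBz h, hxz h hh hgh.symm]; omega
    have hBother : ∀ z ∈ Tf, z ≠ g → z ≠ h → bC (A + x - y) z = bC A z := by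
      intro z hz hzg hzh
      rw [hBz z, hxz z hz hzg, hyz z hz hzh]; omega
    ext z
    simp only [hSfmem, Finset.mem_symmDiff, Finset.mem_insert, Finset.mem_singleton]
    by_cases hzT : z ∈ Tf
    · simp only [hzT, true_and]
      by_cases e1 : z = g
      · have hv := hval A hALC hAf g hg
        simp only [e1, hBg, eq_self_iff_true, true_or, not_true, and_false, false_and, false_or,
          true_and, or_false]
        omega
      · by_cases e2 : z = h
        · have hv := hval A hALC hAf h hh
          simp only [e2, hBh, eq_self_iff_true, or_true, not_true, and_false, false_and, false_or,
            true_and, or_false, e1]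
          omega
        · simp only [hBother z hzT e1 e2, e1, e2, or_self, false_and, and_false, or_false,
            not_false_eq_true, and_true, false_or]
    · have hng : ¬(z = g ∨ z = h) := by rintro (rfl | rfl) <;> exact hzT (by assumption)
      simp only [hzT, false_and, false_or, hng, and_false, or_self, and_true, not_false_eq_true]
  -- reachability: any subset of Tf of the right parity is realized
  have reach : ∀ n : ℕ, ∀ A, A ∈ LC → bC A f = 1 → ∀ U, U ⊆ Tf → (Sf A ∆ U).card = n →
      n % 2 = 0 → ∃ B, B ∈ LC ∧ bC B f = 1 ∧ Sf B = U := by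
    intro n
    induction n using Nat.strong_induction_on with
    | _ n ih =>
      intro A hA hAf U hU hcard hpar
      rcases Nat.eq_zero_or_pos n with hn0 | hnpos
      · subst hn0
        have h0 : Sf A ∆ U = ∅ := Finset.card_eq_zero.mp hcard
        rw [Finset.symmDiff_eq_empty] at h0
        exact ⟨A, hA, hAf, h0⟩
      · have h2 : 2 ≤ n := by omega
        have hΔsub : Sf A ∆ U ⊆ Tf := by
          intro z hz
          rw [Finset.mem_symmDiff] at hz
          rcases hz with ⟨h1, _⟩ | ⟨h1, _⟩
          · exact hSfsub A h1
          · exact hU h1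
        obtain ⟨g, hgΔ⟩ : (Sf A ∆ U).Nonempty := Finset.card_pos.mp (by omega)
        obtain ⟨h, hhΔ, hgh⟩ : ∃ b ∈ Sf A ∆ U, b ≠ g :=
          Finset.exists_mem_ne (by omega) g
        obtain ⟨B, hB, hBf, hSB⟩ := flip A hA hAf g (hΔsub hgΔ) h (hΔsub hhΔ) (Ne.symm hgh)
        have hgh_sub : ({g, h} : Finset (Fin 7 → ℤ)) ⊆ Sf A ∆ U := by
          intro z hz
          rcases Finset.mem_insert.mp hz with rfl | hz
          · exact hgΔ
          · rw [Finset.mem_singleton] at hz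
            exact hz ▸ hhΔ
        have hnew : Sf B ∆ U = (Sf A ∆ U) \ {g, h} := by
          rw [hSB]
          calc (Sf A ∆ {g, h}) ∆ U = Sf A ∆ ({g, h} ∆ U) := symmDiff_assoc _ _ _
            _ = Sf A ∆ (U ∆ {g, h}) := by rw [symmDiff_comm ({g, h} : Finset (Fin 7 → ℤ)) U]
            _ = (Sf A ∆ U) ∆ {g, h} := (symmDiff_assoc _ _ _).symm
            _ = (Sf A ∆ U) \ {g, h} := symmDiff_of_ge hgh_sub
        have hpaircard : ({g, h} : Finset (Fin 7 → ℤ)).card = 2 := Finset.card_pair (Ne.symm hgh)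
        have hΔcard : (Sf B ∆ U).card = n - 2 := by
          rw [hnew, Finset.card_sdiff_of_subset hgh_sub, hpaircard, hcard]
        exact ih (n - 2) (by omega) B hB hBf U hU hΔcard (by omega)
  -- injectivity
  have injS : ∀ A, A ∈ LC → bC A f = 1 → ∀ B, B ∈ LC → bC B f = 1 → Sf A = Sf B → A = B := by
    intro A hA hAf B hB hBf hS
    refine D6' A hA B hB hAf hBf ?_
    intro g hgLC hgfib
    have hgl := lineOf hgLC
    have vals : ∀ z ∈ Tf, bC A z = bC B z := by
      intro z hz
      have h1 : z ∈ Sf A ↔ z ∈ Sf B := by rw [hS]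
      rw [hSfmem, hSfmem] at h1
      have v1 := hval A hA hAf z hz
      have v2 := hval B hB hBf z hz
      simp only [hz, true_and] at h1
      omega
    by_cases hgT : g ∈ Tf
    · exact vals g hgT
    · have hgT' : g ∉ T := fun h => hgT ((hTfmem g).2 h)
      have hfgT : f - g ∈ Tf := by
        rw [hTfmem]
        exact not_not.mp ((not_congr (hT' g hgl hgfib)).mp hgT')
      have e1 := vals (f - g) hfgT
      have e2 : bC A (f - g) = 1 - bC A g := secpair A g hAf
      have e3 : bC B (f - g) = 1 - bC B g := secpair B g hBf
      omega
  -- base point and parity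
  obtain ⟨A₀, hA₀LC, hA₀f⟩ := D1'
  set ε : ZMod 2 := ((Sf A₀).card : ZMod 2) with hεdef
  set Secf : Finset (Fin 7 → ℤ) := LC.filter (fun A => bC A f = 1) with hSecdef
  have hSecmem : ∀ A, A ∈ Secf ↔ A ∈ LC ∧ bC A f = 1 := fun A => Finset.mem_filter
  set Pf : Finset (Finset (Fin 7 → ℤ)) :=
    Tf.powerset.filter (fun U => ((U.card : ℕ) : ZMod 2) = ε) with hPdef
  have hPmem : ∀ U, U ∈ Pf ↔ U ⊆ Tf ∧ ((U.card : ℕ) : ZMod 2) = ε := by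
    intro U
    rw [hPdef, Finset.mem_filter, Finset.mem_powerset]
  set imS : Finset (Finset (Fin 7 → ℤ)) := Secf.image Sf with himdef
  have hparcast : ∀ a b : ℕ, ((a : ZMod 2) = (b : ZMod 2)) ↔ a % 2 = b % 2 := fun a b =>
    ZMod.natCast_eq_natCast_iff' a b 2
  have hPsubim : Pf ⊆ imS := by
    intro U hU
    rw [hPmem] at hU
    obtain ⟨hUsub, hUpar⟩ := hU
    have hpar2 : U.card % 2 = (Sf A₀).card % 2 := by
      rw [← hparcast]
      rw [hUpar, hεdef]
    have hdd : Disjoint (Sf A₀ \ U) (U \ Sf A₀) := disjoint_sdiff_sdiff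
    have hsd1 : (Sf A₀ ∆ U).card = (Sf A₀ \ U).card + (U \ Sf A₀).card := by
      rw [show Sf A₀ ∆ U = (Sf A₀ \ U) ∪ (U \ Sf A₀) from rfl,
        Finset.card_union_of_disjoint hdd]
    have c1 := Finset.card_inter_add_card_sdiff (Sf A₀) U
    have c2 := Finset.card_inter_add_card_sdiff U (Sf A₀)
    rw [Finset.inter_comm] at c2
    obtain ⟨B, hBLC, hBf, hSB⟩ := reach ((Sf A₀ ∆ U).card) A₀ hA₀LC hA₀f U hUsub rfl (by omega)
    rw [himdef, Finset.mem_image]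
    exact ⟨B, (hSecmem B).2 ⟨hBLC, hBf⟩, hSB⟩
  have hinjOn : Set.InjOn Sf Secf := by
    intro A hA B hB h
    rw [Finset.mem_coe, hSecmem] at hA hB
    exact injS A hA.1 hA.2 B hB.1 hB.2 h
  have himcard : imS.card = 16 := by
    rw [himdef, Finset.card_image_of_injOn hinjOn, hSecdef]
    exact Dc.1
  obtain ⟨t₀, ht₀⟩ : Tf.Nonempty := by
    rw [← Finset.card_pos, hT5]
    norm_num
  have hPfcard : 16 ≤ Pf.card := by
    have hmaps : ∀ V ∈ (Tf.erase t₀).powerset,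
        (if ((V.card : ℕ) : ZMod 2) = ε then V else insert t₀ V) ∈ Pf := by
      intro V hV
      rw [Finset.mem_powerset] at hV
      have hVsub : V ⊆ Tf := hV.trans (Finset.erase_subset _ _)
      have ht₀V : t₀ ∉ V := fun h => Finset.notMem_erase t₀ Tf (hV h)
      by_cases hc : ((V.card : ℕ) : ZMod 2) = ε
      · rw [if_pos hc, hPmem]
        exact ⟨hVsub, hc⟩
      · rw [if_neg hc, hPmem]
        refine ⟨Finset.insert_subset ht₀ hVsub, ?_⟩
        rw [Finset.card_insert_of_notMem ht₀V]
        have : ∀ x e : ZMod 2, x ≠ e → ((x + 1 : ZMod 2)) = e := by decide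
        rw [Nat.cast_add, Nat.cast_one]
        exact this _ _ hc
    have hinj : Set.InjOn (fun V : Finset (Fin 7 → ℤ) => if ((V.card : ℕ) : ZMod 2) = ε then V else insert t₀ V)
        ((Tf.erase t₀).powerset) := by
      intro V1 h1 V2 h2 he
      rw [Finset.mem_coe, Finset.mem_powerset] at h1 h2
      have hn1 : t₀ ∉ V1 := fun h => Finset.notMem_erase t₀ Tf (h1 h)
      have hn2 : t₀ ∉ V2 := fun h => Finset.notMem_erase t₀ Tf (h2 h)
      simp only at he
      by_cases c1 : ((V1.card : ℕ) : ZMod 2) = ε <;> by_cases c2 : ((V2.card : ℕ) : ZMod 2) = ε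
      · rwa [if_pos c1, if_pos c2] at he
      · rw [if_pos c1, if_neg c2] at he
        exact absurd (he ▸ Finset.mem_insert_self t₀ V2) hn1
      · rw [if_neg c1, if_pos c2] at he
        exact absurd (he ▸ Finset.mem_insert_self t₀ V1) hn2
      · rw [if_neg c1, if_neg c2] at he
        have := congrArg (Finset.erase · t₀) he
        simpa [Finset.erase_insert hn1, Finset.erase_insert hn2] using this
    have hle := Finset.card_le_card_of_injOn _ hmaps hinj
    have hpow : (Tf.erase t₀).powerset.card = 16 := by
      rw [Finset.card_powerset, Finset.card_erase_of_mem ht₀, hT5]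
      norm_num
    omega
  have hPim : Pf = imS := Finset.eq_of_subset_of_card_le hPsubim (by omega)
  -- translate between Set-level and Finset-level data
  have hSetS : ∀ A : Fin 7 → ℤ, {g | g ∈ T ∧ bC A g = 1} = (↑(Sf A) : Set (Fin 7 → ℤ)) := by
    intro A
    ext z
    simp only [Set.mem_setOf_eq, Finset.mem_coe, hSfmem, hTfmem]
  refine ⟨ε, ?_, ?_, ?_⟩
  · -- MapsTo
    intro A hA
    obtain ⟨hAl, hAf⟩ := hA
    have hALC : A ∈ LC := memLC hAl
    have hSfP : Sf A ∈ Pf := by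
      rw [hPim, himdef, Finset.mem_image]
      exact ⟨A, (hSecmem A).2 ⟨hALC, hAf⟩, rfl⟩
    rw [hPmem] at hSfP
    constructor
    · exact fun z hz => hz.1
    · show (Set.ncard {g | g ∈ T ∧ bC A g = 1} : ZMod 2) = ε
      rw [hSetS A, Set.ncard_coe_finset]
      exact hSfP.2
  · -- InjOn
    intro A hA B hB heq
    obtain ⟨hAl, hAf⟩ := hA
    obtain ⟨hBl, hBf⟩ := hB
    simp only at heq
    rw [hSetS A, hSetS B] at heq
    exact injS A (memLC hAl) hAf B (memLC hBl) hBf (Finset.coe_injective heq)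
  · -- SurjOn
    intro U hU
    obtain ⟨hUsub, hUpar⟩ := hU
    have hUfin : U.Finite := Set.Finite.subset (hTcoe ▸ Tf.finite_toSet) hUsub
    have hUcoe : (↑hUfin.toFinset : Set (Fin 7 → ℤ)) = U := hUfin.coe_toFinset
    have hUfsub : hUfin.toFinset ⊆ Tf := by
      intro z hz
      rw [hTfmem]
      exact hUsub (hUfin.mem_toFinset.mp hz)
    have hUcard : hUfin.toFinset.card = U.ncard :=
      (Set.ncard_coe_finset _).symm.trans (congrArg Set.ncard hUcoe)
    have hUP : hUfin.toFinset ∈ Pf := by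
      rw [hPmem]
      exact ⟨hUfsub, by rw [hUcard]; exact hUpar⟩
    rw [hPim, himdef, Finset.mem_image] at hUP
    obtain ⟨A, hASec, hSfA⟩ := hUP
    rw [hSecmem] at hASec
    refine ⟨A, ⟨lineOf hASec.1, hASec.2⟩, ?_⟩
    show {g | g ∈ T ∧ bC A g = 1} = U
    rw [hSetS A, hSfA, hUcoe]
end

section
/- The conjugacy class of ι_{{1,2,3,4}} in W consists exactly of the five elements ι_S, where S ranges over the subsets of Fin 5 of cardinality 4; in particular, this conjugacy class has exactly 5 elements. (Claim from the proof of Lemma 6.1 of the paper: there are exactly five elements in the Weyl group W(D₅) conjugate to ι₁₂₃₄, namely the elements ι_{klmn}.) -/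
/-- The subgroup `E ⊆ (ℤ/2ℤ)⁵` of vectors with coordinate sum zero. -/
def E4 : AddSubgroup (Fin 5 → ZMod 2) where
  carrier := {v | v 0 + v 1 + v 2 + v 3 + v 4 = 0}
  zero_mem' := by simp
  add_mem' := by
    intro a b ha hb
    simp only [Set.mem_setOf_eq, Pi.add_apply] at *
    linear_combination ha + hb
  neg_mem' := by
    intro a ha
    simp only [Set.mem_setOf_eq, Pi.neg_apply] at *
    linear_combination -ha

lemma mem_E4_iff (v : Fin 5 → ZMod 2) : v ∈ E4 ↔ ∑ i, v i = 0 := by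
  rw [Fin.sum_univ_five]
  rfl

/-- `S₅` acts on `E` by permuting coordinates. -/
def permE4 (σ : Equiv.Perm (Fin 5)) : E4 ≃+ E4 where
  toFun v := ⟨fun i => v.1 (σ⁻¹ i), by
    rw [mem_E4_iff]
    rw [Equiv.sum_comp (σ⁻¹ : Equiv.Perm (Fin 5)) v.1]
    exact (mem_E4_iff v.1).mp v.2⟩
  invFun v := ⟨fun i => v.1 (σ i), by
    rw [mem_E4_iff]
    rw [Equiv.sum_comp (σ : Equiv.Perm (Fin 5)) v.1]
    exact (mem_E4_iff v.1).mp v.2⟩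
  left_inv v := by
    ext i
    simp
  right_inv v := by
    ext i
    simp
  map_add' v w := by
    ext i
    simp

/-- The action of `S₅` on `Multiplicative E` as a homomorphism to the automorphism
group, defining the semidirect product `W = E ⋊ S₅ ≅ W(D₅)`. -/
def phiW : Equiv.Perm (Fin 5) →* MulAut (Multiplicative E4) where
  toFun σ := AddEquiv.toMultiplicative (permE4 σ)
  map_one' := by
    ext v
    rfl
  map_mul' σ τ := by
    ext v
    rfl

/-- The Weyl group `W(D₅)` as the semidirect product `E ⋊ S₅`. -/
abbrev W5 := Multiplicative E4 ⋊[phiW] Equiv.Perm (Fin 5)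

/-- The indicator function `χ_S : Fin 5 → ZMod 2` of a subset `S ⊆ Fin 5`. -/
def chiF (S : Finset (Fin 5)) : Fin 5 → ZMod 2 := fun i => if i ∈ S then 1 else 0

lemma chiF_mem (S : Finset (Fin 5)) (h : Even S.card) : chiF S ∈ E4 := by
  rw [mem_E4_iff]
  have h1 : ∑ i, chiF S i = (S.card : ZMod 2) := by
    unfold chiF
    rw [Finset.sum_ite_mem, Finset.univ_inter, Finset.sum_const, nsmul_eq_mul, mul_one]
  rw [h1]
  obtain ⟨m, hm⟩ := h
  rw [hm]
  push_cast
  ring_nf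
  rw [show ((2 : ZMod 2)) = 0 by decide]
  ring
/-- The element `ι_S = (χ_S, 1)` of `W` for a subset `S ⊆ Fin 5` of even cardinality. -/
def iotaW (S : Finset (Fin 5)) (h : Even S.card) : W5 :=
  SemidirectProduct.inl (Multiplicative.ofAdd (⟨chiF S, chiF_mem S h⟩ : E4))

/-- A permutation `σ ∈ S₅` identified with the element `(0, σ)` of `W`. -/
def permW (σ : Equiv.Perm (Fin 5)) : W5 := SemidirectProduct.inr σ


lemma conj_inl (g : W5) (n : Multiplicative E4) :
    g * SemidirectProduct.inl n * g⁻¹ = SemidirectProduct.inl (phiW g.right n) := by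
  ext
  · simp only [SemidirectProduct.mul_left, SemidirectProduct.mul_right,
      SemidirectProduct.inv_left, SemidirectProduct.inv_right, SemidirectProduct.left_inl,
      SemidirectProduct.right_inl, map_mul, map_one, mul_one, one_mul, MulAut.one_apply,
      map_inv, MulAut.apply_inv_self]
    rw [mul_comm g.left]
    rw [mul_inv_cancel_right]
  · simp [SemidirectProduct.mul_right, SemidirectProduct.inv_right]

lemma phiW_iota (σ : Equiv.Perm (Fin 5)) (S : Finset (Fin 5)) (h : Even S.card) :
    SemidirectProduct.inl (phiW σ (Multiplicative.ofAdd (⟨chiF S, chiF_mem S h⟩ : E4)))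
      = iotaW (S.image σ) (by rwa [Finset.card_image_of_injective _ σ.injective]) := by
  unfold iotaW
  congr 1
  apply Multiplicative.toAdd.injective
  apply Subtype.ext
  funext i
  show chiF S (σ⁻¹ i) = chiF (S.image σ) i
  simp only [chiF, Finset.mem_image]
  by_cases hi : σ⁻¹ i ∈ S
  · rw [if_pos hi, if_pos ⟨σ⁻¹ i, hi, by simp⟩]
  · rw [if_neg hi, if_neg]
    rintro ⟨j, hj, rfl⟩
    exact hi (by simpa using hj)

lemma exists_perm4 (S : Finset (Fin 5)) (h : S.card = 4) :
    ∃ σ : Equiv.Perm (Fin 5), ({0,1,2,3} : Finset (Fin 5)).image σ = S := by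
  revert h
  revert S
  decide

lemma iotaW_inj {S T : Finset (Fin 5)} {h : Even S.card} {h' : Even T.card}
    (hEq : iotaW S h = iotaW T h') : S = T := by
  have h1 : chiF S = chiF T := by
    have h0 := congrArg (fun w : W5 => ((Multiplicative.toAdd w.left : E4) : Fin 5 → ZMod 2)) hEq
    simpa [iotaW] using h0
  ext i
  have h2 := congrFun h1 i
  simp only [chiF] at h2
  by_cases hS : i ∈ S <;> by_cases hT : i ∈ T <;> simp_all

def iota4 (S : {S : Finset (Fin 5) // S.card = 4}) : W5 :=
  iotaW S.1 (by rw [S.2]; exact ⟨2, rfl⟩)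

/-- claim from the proof of Lemma 6.1 of the paper: the conjugacy
class of `ι_{1,2,3,4}` in `W ≅ W(D₅)` consists exactly of the five elements `ι_S`
with `S ⊆ Fin 5` of cardinality 4; in particular it has exactly 5 elements. -/
theorem stmt_16 :
    {w : W5 | IsConj (iotaW {0, 1, 2, 3} (by decide)) w}
      = {w : W5 | ∃ (S : Finset (Fin 5)) (h : Even S.card), S.card = 4 ∧ w = iotaW S h} ∧
    {w : W5 | IsConj (iotaW {0, 1, 2, 3} (by decide)) w}.ncard = 5 := by
  have key : {w : W5 | IsConj (iotaW {0, 1, 2, 3} (by decide)) w}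
      = {w : W5 | ∃ (S : Finset (Fin 5)) (h : Even S.card), S.card = 4 ∧ w = iotaW S h} := by
    ext w
    simp only [Set.mem_setOf_eq, isConj_iff]
    constructor
    · rintro ⟨c, rfl⟩
      rw [iotaW, conj_inl, phiW_iota]
      · refine ⟨_, _, ?_, rfl⟩
        rw [Finset.card_image_of_injective _ c.right.injective]
        decide
      · decide
    · rintro ⟨S, hEven, hCard, rfl⟩
      obtain ⟨σ, hσ⟩ := exists_perm4 S hCard
      refine ⟨SemidirectProduct.inr σ, ?_⟩
      rw [iotaW, conj_inl, show (SemidirectProduct.inr σ : W5).right = σ from rfl,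
        phiW_iota σ {0,1,2,3} (by decide)]
      subst hσ
      rfl
  refine ⟨key, ?_⟩
  rw [key]
  have h2 : {w : W5 | ∃ (S : Finset (Fin 5)) (h : Even S.card), S.card = 4 ∧ w = iotaW S h}
      = iota4 '' Set.univ := by
    ext w
    simp only [Set.mem_setOf_eq, Set.image_univ, Set.mem_range]
    constructor
    · rintro ⟨S, h, hc, rfl⟩
      exact ⟨⟨S, hc⟩, rfl⟩
    · rintro ⟨⟨S, hc⟩, rfl⟩
      exact ⟨S, _, hc, rfl⟩
  have hinj : Function.Injective iota4 := by
    intro a b hab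
    exact Subtype.ext (iotaW_inj hab)
  rw [h2, Set.ncard_image_of_injective _ hinj, Set.ncard_univ, Nat.card_eq_fintype_card]
  decide
end

section
/- The subgroup of W generated by all conjugates of ι_{{1,2,3,4}} (i.e., the normal closure of ι_{{1,2,3,4}} in W) is exactly the normal subgroup E ⋊ {1} of W, which is isomorphic to (ℤ/2ℤ)⁴. (Claim from the proof of Lemma 6.1 of the paper: the normal subgroup 𝔑 ≅ (ℤ/2ℤ)⁴ of the Weyl group W(D₅) is generated by the elements conjugate to ι₁₂₃₄.) -/
lemma even_card_erase (j : Fin 5) : Even (Finset.univ.erase j).card := by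
  revert j; decide

lemma chi_swap (j : Fin 5) :
    (fun i => chiF {0, 1, 2, 3} ((Equiv.swap j 4)⁻¹ i)) = chiF (Finset.univ.erase j) := by
  revert j; decide

instance : DecidablePred (· ∈ E4) := fun v =>
  decidable_of_iff _ (mem_E4_iff v).symm

set_option maxRecDepth 10000 in
lemma E4_decomp : ∀ v : E4, v = ∑ j : Fin 5, ((v : Fin 5 → ZMod 2) j).val •
    (⟨chiF (Finset.univ.erase j), chiF_mem _ (even_card_erase j)⟩ : E4) := by decide

/-- Each `ι_{univ \ {j}}` is in the normal closure of `ι_{0,1,2,3}`. -/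
lemma iota_erase_mem (j : Fin 5) :
    iotaW (Finset.univ.erase j) (even_card_erase j) ∈
      Subgroup.normalClosure {iotaW {0, 1, 2, 3} (by decide)} := by
  have hbase : iotaW {0, 1, 2, 3} (by decide) ∈
      Subgroup.normalClosure {iotaW {0, 1, 2, 3} (by decide)} :=
    Subgroup.subset_normalClosure rfl
  have hnormal : (Subgroup.normalClosure
      ({iotaW {0, 1, 2, 3} (by decide)} : Set W5)).Normal :=
    Subgroup.normalClosure_normal
  have hconj := hnormal.conj_mem _ hbase (SemidirectProduct.inr (Equiv.swap j 4))
  have hco : SemidirectProduct.inr (φ := phiW) (Equiv.swap j 4) *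
      iotaW {0, 1, 2, 3} (by decide) *
      (SemidirectProduct.inr (Equiv.swap j 4))⁻¹ =
      iotaW (Finset.univ.erase j) (even_card_erase j) := by
    rw [iotaW, ← map_inv, ← SemidirectProduct.inl_aut]
    show SemidirectProduct.inl (Multiplicative.ofAdd (permE4 (Equiv.swap j 4) _)) = _
    rw [iotaW]
    apply congrArg
    apply congrArg
    apply Subtype.ext
    exact chi_swap j
  rwa [hco] at hconj

/-- The first four coordinates give an additive isomorphism `E4 ≃+ (Fin 4 → ZMod 2)`. -/
def e4Equiv : E4 ≃+ (Fin 4 → ZMod 2) where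
  toFun v i := (v : Fin 5 → ZMod 2) i.castSucc
  invFun w := ⟨fun i => if h : (i : ℕ) < 4 then w ⟨i, h⟩ else w 0 + w 1 + w 2 + w 3, by
    show w ⟨0, by norm_num⟩ + w ⟨1, by norm_num⟩ + w ⟨2, by norm_num⟩ + w ⟨3, by norm_num⟩ +
      (w 0 + w 1 + w 2 + w 3) = 0
    have h2 : (2 : ZMod 2) = 0 := rfl
    have e0 : w ⟨0, by norm_num⟩ = w 0 := rfl
    have e1 : w ⟨1, by norm_num⟩ = w 1 := rfl
    have e2 : w ⟨2, by norm_num⟩ = w 2 := rfl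
    have e3 : w ⟨3, by norm_num⟩ = w 3 := rfl
    rw [e0, e1, e2, e3]
    linear_combination (w 0 + w 1 + w 2 + w 3) * h2⟩
  left_inv v := by
    apply Subtype.ext
    funext i
    have hv := (mem_E4_iff _).mp v.2
    rw [Fin.sum_univ_five] at hv
    have h2 : (2 : ZMod 2) = 0 := rfl
    fin_cases i
    · rfl
    · rfl
    · rfl
    · rfl
    · show (v : Fin 5 → ZMod 2) 0 + (v : Fin 5 → ZMod 2) 1 +
          (v : Fin 5 → ZMod 2) 2 + (v : Fin 5 → ZMod 2) 3 = (v : Fin 5 → ZMod 2) 4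
      linear_combination hv - ((v : Fin 5 → ZMod 2) 4) * h2
  right_inv w := by
    funext i
    show (if h : ((i.castSucc : Fin 5) : ℕ) < 4 then w ⟨_, h⟩ else _) = w i
    rw [dif_pos (show ((i.castSucc : Fin 5) : ℕ) < 4 from i.isLt)]
    exact congrArg w (Fin.ext rfl)
  map_add' v w := rfl

/-- claim from the proof of Lemma 6.1 of the paper: the normal
closure of `ι_{1,2,3,4}` in `W ≅ W(D₅)` is exactly the normal subgroup `E ⋊ {1}`
(the range of `inl : E → W`), which is isomorphic to `(ℤ/2ℤ)⁴`. -/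
theorem stmt_17 :
    Subgroup.normalClosure {iotaW {0, 1, 2, 3} (by decide)}
      = (SemidirectProduct.inl : Multiplicative E4 →* W5).range ∧
    Nonempty ((SemidirectProduct.inl : Multiplicative E4 →* W5).range ≃*
      Multiplicative (Fin 4 → ZMod 2)) := by
  constructor
  · apply le_antisymm
    · rw [SemidirectProduct.range_inl_eq_ker_rightHom]
      apply Subgroup.normalClosure_le_normal
      intro x hx
      rw [Set.mem_singleton_iff] at hx
      subst hx
      simp [iotaW, MonoidHom.mem_ker]
    · rintro x ⟨a, rfl⟩
      set N := Subgroup.normalClosure ({iotaW {0, 1, 2, 3} (by decide)} : Set W5) with hN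
      let M : AddSubgroup E4 :=
        Subgroup.toAddSubgroup' (N.comap (SemidirectProduct.inl : Multiplicative E4 →* W5))
      have hM : ∀ j : Fin 5,
          (⟨chiF (Finset.univ.erase j), chiF_mem _ (even_card_erase j)⟩ : E4) ∈ M :=
        fun j => iota_erase_mem j
      have : a ∈ M := by
        rw [E4_decomp a]
        exact AddSubgroup.sum_mem M (fun j _ => AddSubgroup.nsmul_mem M (hM j) _)
      exact this
  · exact ⟨((MulEquiv.subgroupCongr rfl).trans
      (MonoidHom.ofInjective SemidirectProduct.inl_injective).symm).trans
      (AddEquiv.toMultiplicative e4Equiv)⟩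
end

section
/- Let H be any subgroup of W that is isomorphic as an abstract group to S₅ = Equiv.Perm (Fin 5). Then H ∩ (E ⋊ {1}) is the trivial subgroup, and the subgroup generated by H together with E ⋊ {1} is all of W; that is, W is the internal semidirect product of its normal subgroup E ⋊ {1} with H. (Claim from the proof of Lemma 2.4 of the paper: for any subgroup H ≅ 𝔖₅ of W(D₅), the intersection 𝔑 ∩ H is a normal 2-subgroup of H and hence trivial, and order counting gives W(D₅) ≅ 𝔑 ⋊ H.) -/
set_option maxRecDepth 10000 in
lemma key_perm5 : ∀ σ : Equiv.Perm (Fin 5), σ ≠ 1 → σ * σ = 1 →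
    ∃ τ : Equiv.Perm (Fin 5), ¬((τ * σ * τ⁻¹ * σ) * (τ * σ * τ⁻¹ * σ) = 1) := by decide

lemma mem_inl_range_sq (x : W5)
    (hx : x ∈ (SemidirectProduct.inl : Multiplicative E4 →* W5).range) : x * x = 1 := by
  obtain ⟨v, rfl⟩ := hx
  rw [← map_mul]
  have : v * v = 1 := by
    have : v.toAdd + v.toAdd = 0 := by
      ext i
      exact CharTwo.add_self_eq_zero _
    rw [← ofAdd_toAdd v, ← ofAdd_add, this, ofAdd_zero]
  rw [this, map_one]

/-- claim from the proof of Lemma 2.4 of the paper: for any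
subgroup `H` of `W ≅ W(D₅)` abstractly isomorphic to `S₅`, the intersection of `H`
with the normal subgroup `E ⋊ {1}` (the range of `inl`) is trivial and together they
generate `W`; i.e. `W` is the internal semidirect product of `E ⋊ {1}` with `H`. -/
theorem stmt_18 (H : Subgroup W5) (hH : Nonempty (H ≃* Equiv.Perm (Fin 5))) :
    H ⊓ (SemidirectProduct.inl : Multiplicative E4 →* W5).range = ⊥ ∧
    H ⊔ (SemidirectProduct.inl : Multiplicative E4 →* W5).range = ⊤ := by
  set N := (SemidirectProduct.inl : Multiplicative E4 →* W5).range with hN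
  have hNker : N = (SemidirectProduct.rightHom : W5 →* Equiv.Perm (Fin 5)).ker :=
    SemidirectProduct.range_inl_eq_ker_rightHom
  have hNnormal : N.Normal := by rw [hNker]; infer_instance
  obtain ⟨e⟩ := hH
  -- Part 1
  have h1 : H ⊓ N = ⊥ := by
    rw [eq_bot_iff]
    rintro x ⟨hxH, hxN⟩
    simp only [Subgroup.mem_bot]
    by_contra hx1
    set ξ : H := ⟨x, hxH⟩ with hξ
    have hξ1 : ξ ≠ 1 := by
      intro h
      exact hx1 (by simpa [hξ] using congrArg Subtype.val h)
    have hσ1 : e ξ ≠ 1 := by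
      intro h
      exact hξ1 (by simpa using e.injective (h.trans (map_one e).symm))
    have hσ2 : e ξ * e ξ = 1 := by
      rw [← map_mul]
      have : ξ * ξ = 1 := Subtype.ext (mem_inl_range_sq x hxN)
      rw [this, map_one]
    obtain ⟨τ, hτ⟩ := key_perm5 (e ξ) hσ1 hσ2
    set t : H := e.symm τ with ht
    set y : H := t * ξ * t⁻¹ * ξ with hy
    have hyN : (y : W5) ∈ N := by
      have h1' : (t : W5) * x * (t : W5)⁻¹ ∈ N := hNnormal.conj_mem x hxN t
      have : (y : W5) = ((t : W5) * x * (t : W5)⁻¹) * x := by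
        simp [hy, hξ, mul_assoc]
      rw [this]
      exact N.mul_mem h1' hxN
    have hy2 : y * y = 1 := Subtype.ext (mem_inl_range_sq _ hyN)
    apply hτ
    have : e y = τ * e ξ * τ⁻¹ * e ξ := by
      simp [hy, ht, map_mul, map_inv]
    rw [← this, ← map_mul, hy2, map_one]
  refine ⟨h1, ?_⟩
  -- Part 2
  set f : H →* Equiv.Perm (Fin 5) :=
    (SemidirectProduct.rightHom : W5 →* Equiv.Perm (Fin 5)).comp H.subtype with hf
  have hfinj : Function.Injective f := by
    rw [← MonoidHom.ker_eq_bot_iff, eq_bot_iff]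
    intro x hx
    have hxN : (x : W5) ∈ N := by
      rw [hNker]
      exact hx
    have : (x : W5) ∈ H ⊓ N := ⟨x.2, hxN⟩
    rw [h1, Subgroup.mem_bot] at this
    simp only [Subgroup.mem_bot]
    exact Subtype.ext this
  have hcard : Nat.card H = Nat.card (Equiv.Perm (Fin 5)) := Nat.card_congr e.toEquiv
  have hfsurj : Function.Surjective f :=
    ((Nat.bijective_iff_injective_and_card f).2 ⟨hfinj, hcard⟩).2
  rw [eq_top_iff]
  intro w _
  obtain ⟨h, hh⟩ := hfsurj (SemidirectProduct.rightHom w)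
  have hmem : (h : W5)⁻¹ * w ∈ N := by
    rw [hNker, MonoidHom.mem_ker, map_mul, map_inv]
    have : SemidirectProduct.rightHom (h : W5) = SemidirectProduct.rightHom w := hh
    rw [this, inv_mul_cancel]
  have : w = (h : W5) * ((h : W5)⁻¹ * w) := by group
  rw [this]
  exact Subgroup.mul_mem _ (Subgroup.mem_sup_left h.2) (Subgroup.mem_sup_right hmem)
end
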